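/- arXiv:2302.12908 — 12 statements merged into one kernel-verified Lean document; each statement's English description precedes it below -/
import Mathlib

section
/- Let ρ be a constant-length-L substitution on a finite alphabet whose columns are all bijections, with ρ_0 = id, and let G be the group generated by the columns inside the symmetric group. Then for every k ≥ 1 and every 0 ≤ m ≤ L^k − 1, the column of ρ^{k|G|} at position m·(L^{k|G|}−1)/(L^k−1) is the identity. Consequently, any fixed point w of ρ contains a monochromatic arithmetic progression of difference d = (L^{k|G|}−1)/(L^k−1) and length at least L^k starting at position 0. -/
/-- The `k`-th letter of `ρ^n(a)` for a constant-length-`L` substitution. -/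
def substPowLetter {A : Type*} (L : ℕ) (ρ : A → ℕ → A) : ℕ → A → ℕ → A
  | 0, a, _ => a
  | n+1, a, k => ρ (substPowLetter L ρ n a (k / L)) (k % L)

/-- `w` is a one-sided fixed point of the constant-length-`L` substitution `ρ`. -/
def SubstFixedPoint {A : Type*} (L : ℕ) (ρ : A → ℕ → A) (w : ℕ → A) : Prop :=
  ∀ m i, i < L → w (L * m + i) = ρ (w m) i

section Aux

variable {A : Type*}

/-- The column permutation of `ρ^n` at position `p`. -/
def colPerm (L : ℕ) (σ : ℕ → Equiv.Perm A) : ℕ → ℕ → Equiv.Perm A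
  | 0, _ => 1
  | n+1, p => σ (p % L) * colPerm L σ n (p / L)

lemma substPow_eq (L : ℕ) (σ : ℕ → Equiv.Perm A) :
    ∀ (n : ℕ) (a : A) (p : ℕ),
      substPowLetter L (fun a i => σ i a) n a p = colPerm L σ n p a
  | 0, _, _ => rfl
  | n+1, a, p => by
    show σ (p % L) (substPowLetter L (fun a i => σ i a) n a (p / L)) = _
    rw [substPow_eq L σ n]
    simp [colPerm]

lemma colPerm_add_pow_mul (L : ℕ) (σ : ℕ → Equiv.Perm A) (hL : 0 < L) :
    ∀ (n p q : ℕ), colPerm L σ n (p + L ^ n * q) = colPerm L σ n p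
  | 0, _, _ => rfl
  | n+1, p, q => by
    have h1 : (p + L ^ (n+1) * q) % L = p % L := by
      rw [pow_succ, mul_comm (L ^ n) L, mul_assoc]
      exact Nat.add_mul_mod_self_left p L (L ^ n * q)
    have h2 : (p + L ^ (n+1) * q) / L = p / L + L ^ n * q := by
      rw [pow_succ, mul_comm (L ^ n) L, mul_assoc, Nat.add_mul_div_left _ _ hL]
    simp only [colPerm, h1, h2, colPerm_add_pow_mul L σ hL n]

lemma colPerm_add (L : ℕ) (σ : ℕ → Equiv.Perm A) :
    ∀ (m n p : ℕ),
      colPerm L σ (m + n) p = colPerm L σ m p * colPerm L σ n (p / L ^ m)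
  | 0, n, p => by simp [colPerm]
  | m+1, n, p => by
    have h : m + 1 + n = (m + n) + 1 := by omega
    have hd : p / L ^ (m + 1) = p / L / L ^ m := by
      rw [Nat.div_div_eq_div_mul, pow_succ']
    rw [h]
    simp only [colPerm, colPerm_add L σ m n (p / L), hd, mul_assoc]

lemma colPerm_mem (L : ℕ) (σ : ℕ → Equiv.Perm A) (hL : 0 < L) :
    ∀ (n p : ℕ), colPerm L σ n p ∈ Subgroup.closure (σ '' Set.Iio L)
  | 0, _ => one_mem _
  | n+1, p => by
    refine mul_mem (Subgroup.subset_closure ⟨p % L, Nat.mod_lt _ hL, rfl⟩)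
      (colPerm_mem L σ hL n (p / L))

lemma colPerm_blocks (L : ℕ) (σ : ℕ → Equiv.Perm A) (hL : 0 < L)
    (k m : ℕ) (hm : m < L ^ k) :
    ∀ (j : ℕ),
      colPerm L σ (k * j) (m * ∑ i ∈ Finset.range j, (L ^ k) ^ i)
        = (colPerm L σ k m) ^ j
  | 0 => by simp [colPerm]
  | j+1 => by
    have hLk : 0 < L ^ k := pow_pos hL k
    have hsum : m * ∑ i ∈ Finset.range (j+1), (L ^ k) ^ i
        = m + L ^ k * (m * ∑ i ∈ Finset.range j, (L ^ k) ^ i) := by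
      rw [geom_sum_succ]
      ring
    have hmul : k * (j + 1) = k + k * j := by ring
    rw [hsum, hmul, colPerm_add]
    have h1 : colPerm L σ k (m + L ^ k * (m * ∑ i ∈ Finset.range j, (L ^ k) ^ i))
        = colPerm L σ k m := colPerm_add_pow_mul L σ hL k m _
    have h2 : (m + L ^ k * (m * ∑ i ∈ Finset.range j, (L ^ k) ^ i)) / L ^ k
        = m * ∑ i ∈ Finset.range j, (L ^ k) ^ i := by
      rw [mul_comm (L ^ k), Nat.add_mul_div_right _ _ hLk, Nat.div_eq_of_lt hm,
        zero_add]
    rw [h1, h2, colPerm_blocks L σ hL k m hm j, pow_succ']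

lemma fixedPoint_pull (L : ℕ) (σ : ℕ → Equiv.Perm A) (hL : 0 < L)
    (w : ℕ → A) (hw : SubstFixedPoint L (fun a i => σ i a) w) :
    ∀ (n p : ℕ), w p = substPowLetter L (fun a i => σ i a) n (w (p / L ^ n)) p
  | 0, p => by simp [substPowLetter]
  | n+1, p => by
    have h1 : w p = σ (p % L) (w (p / L)) := by
      have := hw (p / L) (p % L) (Nat.mod_lt _ hL)
      rwa [Nat.div_add_mod] at this
    have hd : p / L ^ (n + 1) = p / L / L ^ n := by
      rw [Nat.div_div_eq_div_mul, pow_succ']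
    show w p = σ (p % L) (substPowLetter L (fun a i => σ i a) n (w (p / L ^ (n+1))) (p / L))
    rw [h1, hd, ← fixedPoint_pull L σ hL w hw n (p / L)]

end Aux

/-- for a bijective constant-length-`L` substitution with columns
`σ i` (`i < L`), `σ 0 = id`, and column group `G` generated by the columns,
for every `k ≥ 1` the columns of `ρ^{k|G|}` at the positions
`m·(L^{k|G|}−1)/(L^k−1)`, `0 ≤ m ≤ L^k−1`, are all the identity; consequently
any fixed point `w` of `ρ` has a monochromatic arithmetic progression of
difference `d = (L^{k|G|}−1)/(L^k−1)` and length `L^k` starting at `0`. -/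
theorem bijective_column_identity_progression {A : Type*} [Fintype A]
    (L : ℕ) (hL : 2 ≤ L) (σ : ℕ → Equiv.Perm A) (hσ0 : σ 0 = 1)
    (w : ℕ → A) (hw : SubstFixedPoint L (fun a i => σ i a) w)
    (k : ℕ) (hk : 1 ≤ k) :
    ∀ m < L ^ k,
      (∀ a : A,
        substPowLetter L (fun a i => σ i a)
          (k * Nat.card (Subgroup.closure (σ '' Set.Iio L))) a
          (m * ((L ^ (k * Nat.card (Subgroup.closure (σ '' Set.Iio L))) - 1) /
            (L ^ k - 1))) = a) ∧
      w (m * ((L ^ (k * Nat.card (Subgroup.closure (σ '' Set.Iio L))) - 1) /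
          (L ^ k - 1))) = w 0 := by
  intro m hm
  set G := Subgroup.closure (σ '' Set.Iio L) with hG
  set N := Nat.card G with hN
  have hL0 : 0 < L := by omega
  have hx : 2 ≤ L ^ k := le_trans hL (Nat.le_self_pow (by omega) L)
  -- the difference equals the geometric sum
  have hd : (L ^ (k * N) - 1) / (L ^ k - 1) = ∑ i ∈ Finset.range N, (L ^ k) ^ i := by
    rw [pow_mul]
    exact (Nat.geomSum_eq hx N).symm
  -- the column permutation at position m * d is the identity
  have hcol : colPerm L σ (k * N) (m * ((L ^ (k * N) - 1) / (L ^ k - 1))) = 1 := by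
    rw [hd, colPerm_blocks L σ hL0 k m hm N]
    have hmem : colPerm L σ k m ∈ G := colPerm_mem L σ hL0 k m
    have : ((⟨colPerm L σ k m, hmem⟩ : G) ^ N : G) = 1 := pow_card_eq_one'
    have := congrArg (Subgroup.subtype G) this
    simpa using this
  have hpart1 : ∀ a : A,
      substPowLetter L (fun a i => σ i a) (k * N) a
        (m * ((L ^ (k * N) - 1) / (L ^ k - 1))) = a := by
    intro a
    rw [substPow_eq, hcol]
    rfl
  refine ⟨hpart1, ?_⟩
  -- the position is below L^(k*N)
  have hlt : m * ((L ^ (k * N) - 1) / (L ^ k - 1)) < L ^ (k * N) := by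
    rw [hd]
    calc m * ∑ i ∈ Finset.range N, (L ^ k) ^ i
        ≤ (L ^ k - 1) * ∑ i ∈ Finset.range N, (L ^ k) ^ i :=
          Nat.mul_le_mul_right _ (by omega)
      _ = (L ^ k) ^ N - 1 := by
          have := geom_sum_mul_add (L ^ k - 1) N
          have h1 : L ^ k - 1 + 1 = L ^ k := by omega
          rw [h1] at this
          have hpos : 1 ≤ (L ^ k) ^ N := Nat.one_le_pow _ _ (by omega)
          rw [mul_comm]
          omega
      _ < (L ^ k) ^ N := by
          have hpos : 1 ≤ (L ^ k) ^ N := Nat.one_le_pow _ _ (by omega)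
          omega
      _ = L ^ (k * N) := (pow_mul L k N).symm
  have := fixedPoint_pull L σ hL0 w hw (k * N)
    (m * ((L ^ (k * N) - 1) / (L ^ k - 1)))
  rw [Nat.div_eq_of_lt hlt] at this
  rw [this, hpart1]
end

section
/- Let ρ be a bijective constant-length-L substitution with ρ_0 = id whose column group G is Abelian, and suppose ρ is g-palindromic, i.e., ρ_i ∘ ρ_{L−1−i} = g for all 0 ≤ i ≤ L−1. Then for every n ≥ 1, the substitution ρ^n (of length L^n) is g^n-palindromic: (ρ^n)_i ∘ (ρ^n)_{L^n−1−i} = g^n for all 0 ≤ i ≤ L^n − 1. -/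
lemma substPowLetter_comm {A : Type*} (L : ℕ) (hL : 0 < L) (σ : ℕ → Equiv.Perm A)
    (habel : ∀ i < L, ∀ j < L, σ i * σ j = σ j * σ i)
    (j : ℕ) (hj : j < L) :
    ∀ n k (b : A), substPowLetter L (fun a j => σ j a) n (σ j b) k
      = σ j (substPowLetter L (fun a j => σ j a) n b k) := by
  intro n
  induction n with
  | zero => intro k b; rfl
  | succ n ih =>
    intro k b
    simp only [substPowLetter]
    rw [ih]
    have h := habel (k % L) (Nat.mod_lt _ hL) j hj
    have := DFunLike.congr_fun h (substPowLetter L (fun a j => σ j a) n b (k / L))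
    simpa [Equiv.Perm.mul_apply] using this

/-- if `ρ` is a bijective constant-length-`L` substitution with
columns `σ i`, `σ 0 = id`, Abelian column group, which is `g`-palindromic
(`σ i ∘ σ (L−1−i) = g` for all `i < L`), then `ρ^n` is `g^n`-palindromic:
`(ρ^n)_i ∘ (ρ^n)_{L^n−1−i} = g^n` for all `0 ≤ i ≤ L^n − 1`. -/
theorem power_of_palindromic_is_palindromic {A : Type*} [Fintype A]
    (L : ℕ) (hL : 2 ≤ L) (σ : ℕ → Equiv.Perm A) (hσ0 : σ 0 = 1)
    (habel : ∀ i < L, ∀ j < L, σ i * σ j = σ j * σ i)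
    (g : Equiv.Perm A) (hpal : ∀ i < L, σ i * σ (L - 1 - i) = g)
    (n : ℕ) (hn : 1 ≤ n) :
    ∀ i < L ^ n, ∀ a : A,
      substPowLetter L (fun a j => σ j a) n
        (substPowLetter L (fun a j => σ j a) n a (L ^ n - 1 - i)) i =
      (g ^ n) a := by
  clear hn
  induction n with
  | zero =>
    intro i hi a
    simp only [pow_zero] at hi ⊢
    have : i = 0 := by omega
    subst this
    simp [substPowLetter]
  | succ n ih =>
    intro i hi a
    have hL0 : 0 < L := by omega
    have hr : i % L < L := Nat.mod_lt _ hL0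
    have hq : i / L < L ^ n := by
      rw [Nat.div_lt_iff_lt_mul hL0]
      rw [pow_succ] at hi
      exact hi
    set q := i / L with hqdef
    set r := i % L with hrdef
    have hm : L ^ (n + 1) - 1 - i = L * (L ^ n - 1 - q) + (L - 1 - r) := by
      have hiq : L * q + r = i := Nat.div_add_mod i L
      have hs : (L ^ n - 1 - q) + (q + 1) = L ^ n := by omega
      have h3 : L * (L ^ n - 1 - q) + (L * q + L) = L * L ^ n := by
        calc L * (L ^ n - 1 - q) + (L * q + L)
            = L * ((L ^ n - 1 - q) + (q + 1)) := by ring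
          _ = L * L ^ n := by rw [hs]
      have hp : L ^ (n + 1) = L * L ^ n := by ring
      omega
    simp only [substPowLetter, hm]
    have hmod : (L * (L ^ n - 1 - q) + (L - 1 - r)) % L = L - 1 - r := by
      simp [Nat.mul_add_mod, Nat.mod_eq_of_lt (show L - 1 - r < L by omega)]
    have hdiv : (L * (L ^ n - 1 - q) + (L - 1 - r)) / L = L ^ n - 1 - q := by
      rw [Nat.mul_add_div hL0, Nat.div_eq_of_lt (by omega), Nat.add_zero]
    rw [hmod, hdiv]
    rw [substPowLetter_comm L hL0 σ habel _ (show L - 1 - r < L by omega) n q]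
    rw [ih q hq a]
    have hg := hpal r hr
    have hgap := DFunLike.congr_fun hg ((g ^ n) a)
    simp only [Equiv.Perm.mul_apply] at hgap
    rw [hgap, pow_succ']
    rfl
end

section
/- For the primitivity index of an induced substitution: if ρ is a primitive substitution on an alphabet of c letters, the substitution matrix M^{(2)} of its level-2 induced substitution has size at most c² × c², and by Wielandt's bound (M^{(2)})^{c⁴−2c²+2} is entrywise positive; consequently the constant R = 2L^{c⁴−2c²+3} − L is a linear recurrence constant valid for every fixed point of every length-L substitution on c letters satisfying aperiodicity, primitivity, bijectivity and ρ_0 = id. -/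
/-- `ρ` is primitive: some power of `ρ` maps every letter to a word
containing every letter. -/
def SubstPrimitive {A : Type*} (L : ℕ) (ρ : A → ℕ → A) : Prop :=
  ∃ n, ∀ a b : A, ∃ k, k < L ^ n ∧ substPowLetter L ρ n a k = b

/-- `ρ` is aperiodic: it admits no (purely) periodic fixed point. -/
def SubstAperiodic {A : Type*} (L : ℕ) (ρ : A → ℕ → A) : Prop :=
  ∀ w : ℕ → A, SubstFixedPoint L ρ w → ¬ ∃ p, 1 ≤ p ∧ ∀ j, w (j + p) = w j

/-- `R` is a linear recurrence constant for `x`: every factor of `x` of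
length `len` occurs in every window of `x` of length `R·len`. -/
def LinearRecurrenceConstant {A : Type*} (x : ℕ → A) (R : ℕ) : Prop :=
  ∀ q len, 1 ≤ len → ∀ m : ℕ, ∃ p, m ≤ p ∧ p + len ≤ m + R * len ∧
    ∀ i < len, x (p + i) = x (q + i)

set_option linter.unusedSectionVars false
section Aux

variable {A : Type*} [Fintype A]

private lemma spl_zero (L : ℕ) (σ : ℕ → Equiv.Perm A) (hσ0 : σ 0 = 1) :
    ∀ (n : ℕ) (b : A), substPowLetter L (fun a i => σ i a) n b 0 = b := by
  intro n
  induction n with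
  | zero => intro b; rfl
  | succ n ih =>
    intro b
    show σ (0 % L) (substPowLetter L (fun a i => σ i a) n b (0 / L)) = b
    simp only [Nat.zero_mod, Nat.zero_div, ih, hσ0, Equiv.Perm.one_apply]

private lemma spl_pad (L : ℕ) (hL : 0 < L) (σ : ℕ → Equiv.Perm A) (hσ0 : σ 0 = 1) :
    ∀ (n m : ℕ) (b : A) (u : ℕ), u < L ^ n →
      substPowLetter L (fun a i => σ i a) (n + m) b u =
      substPowLetter L (fun a i => σ i a) n b u := by
  intro n
  induction n with
  | zero =>
    intro m b u hu
    have : u = 0 := by simpa using hu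
    subst this
    rw [Nat.zero_add, spl_zero L σ hσ0]
    rfl
  | succ n ih =>
    intro m b u hu
    have h1 : n + 1 + m = (n + m) + 1 := by omega
    rw [h1]
    show σ (u % L) (substPowLetter L (fun a i => σ i a) (n + m) b (u / L)) =
      σ (u % L) (substPowLetter L (fun a i => σ i a) n b (u / L))
    rw [ih m b (u / L) (by
      rw [Nat.div_lt_iff_lt_mul hL]
      calc u < L ^ (n + 1) := hu
        _ = L ^ n * L := pow_succ L n)]

private lemma fixed_point_block (L : ℕ) (hL : 0 < L) (σ : ℕ → Equiv.Perm A)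
    (x : ℕ → A) (hx : SubstFixedPoint L (fun a i => σ i a) x) :
    ∀ (n e j : ℕ), j < L ^ n →
      x (e * L ^ n + j) = substPowLetter L (fun a i => σ i a) n (x e) j := by
  intro n
  induction n with
  | zero =>
    intro e j hj
    have : j = 0 := by simpa using hj
    subst this
    simp only [pow_zero, Nat.mul_one, Nat.add_zero]
    rfl
  | succ n ih =>
    intro e j hj
    have hkey : e * L ^ (n + 1) + j = L * (e * L ^ n + j / L) + j % L := by
      have h := Nat.div_add_mod j L
      calc e * L ^ (n + 1) + j = L * (e * L ^ n) + (L * (j / L) + j % L) := by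
            rw [h]; ring
        _ = L * (e * L ^ n + j / L) + j % L := by ring
    rw [hkey, hx _ _ (Nat.mod_lt _ hL)]
    show σ (j % L) (x (e * L ^ n + j / L)) =
      σ (j % L) (substPowLetter L (fun a i => σ i a) n (x e) (j / L))
    rw [ih e (j / L) (by
      rw [Nat.div_lt_iff_lt_mul hL]
      calc j < L ^ (n + 1) := hj
        _ = L ^ n * L := pow_succ L n)]

private lemma orbit_full (c L : ℕ) (hc : 2 ≤ c) (hL : 2 ≤ L) (hcard : Fintype.card A = c)
    (σ : ℕ → Equiv.Perm A) (hσ0 : σ 0 = 1)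
    (hprim : SubstPrimitive L (fun a i => σ i a)) :
    ∀ (n : ℕ), c - 1 ≤ n → ∀ (b s : A), ∃ u, u < L ^ n ∧
      substPowLetter L (fun a i => σ i a) n b u = s := by
  classical
  have hL0 : 0 < L := by omega
  -- core at level c - 1
  have core : ∀ b s : A, ∃ u, u < L ^ (c - 1) ∧
      substPowLetter L (fun a i => σ i a) (c - 1) b u = s := by
    intro b s
    set O : ℕ → Finset A :=
      fun n => (Finset.range (L ^ n)).image (fun k => substPowLetter L (fun a i => σ i a) n b k)
      with hO
    have hmono : ∀ n, O n ⊆ O (n + 1) := by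
      intro n t ht
      simp only [hO, Finset.mem_image, Finset.mem_range] at ht ⊢
      obtain ⟨k, hk, hkt⟩ := ht
      refine ⟨k * L, ?_, ?_⟩
      · calc k * L < L ^ n * L := (Nat.mul_lt_mul_right hL0).2 hk
          _ = L ^ (n + 1) := (pow_succ L n).symm
      · show σ (k * L % L) (substPowLetter L (fun a i => σ i a) n b (k * L / L)) = t
        rw [Nat.mul_mod_left, Nat.mul_div_cancel _ hL0, hσ0]
        simpa using hkt
    have hstep : ∀ n, O n = O (n + 1) → O (n + 1) = O (n + 2) := by
      intro n h
      apply Finset.Subset.antisymm (hmono _)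
      intro t ht
      simp only [hO, Finset.mem_image, Finset.mem_range] at ht ⊢
      obtain ⟨k, hk, hkt⟩ := ht
      have hk' : k / L < L ^ (n + 1) := by
        rw [Nat.div_lt_iff_lt_mul hL0]
        calc k < L ^ (n + 2) := hk
          _ = L ^ (n + 1) * L := pow_succ L (n + 1)
      have hmem : substPowLetter L (fun a i => σ i a) (n + 1) b (k / L) ∈ O n := by
        rw [h]
        exact Finset.mem_image.2 ⟨k / L, Finset.mem_range.2 hk', rfl⟩
      simp only [hO, Finset.mem_image, Finset.mem_range] at hmem
      obtain ⟨k'', hk'', hk''eq⟩ := hmem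
      have hmodL : k % L < L := Nat.mod_lt _ hL0
      refine ⟨k'' * L + k % L, ?_, ?_⟩
      · calc k'' * L + k % L < k'' * L + L := by omega
          _ = (k'' + 1) * L := by ring
          _ ≤ L ^ n * L := Nat.mul_le_mul_right L (by omega)
          _ = L ^ (n + 1) := (pow_succ L n).symm
      · show σ ((k'' * L + k % L) % L)
          (substPowLetter L (fun a i => σ i a) n b ((k'' * L + k % L) / L)) = t
        have e1 : (k'' * L + k % L) % L = k % L := by
          rw [Nat.mul_comm, Nat.mul_add_mod, Nat.mod_eq_of_lt hmodL]
        have e2 : (k'' * L + k % L) / L = k'' := by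
          rw [Nat.mul_comm, Nat.mul_add_div hL0, Nat.div_eq_of_lt hmodL, Nat.add_zero]
        rw [e1, e2, hk''eq]
        exact hkt
    have hstall : ∃ n0, n0 < c ∧ O n0 = O (n0 + 1) := by
      by_contra hcon
      push_neg at hcon
      have hgrow : ∀ k, k ≤ c → k + 1 ≤ (O k).card := by
        intro k
        induction k with
        | zero =>
          intro _
          have hb : b ∈ O 0 := by
            simp only [hO, Finset.mem_image, Finset.mem_range]
            exact ⟨0, by simp, rfl⟩
          simpa using Finset.card_pos.2 ⟨b, hb⟩
        | succ k ih =>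
          intro hk
          have h1 := ih (by omega)
          have h2 : O k ⊂ O (k + 1) :=
            ⟨hmono k, fun hsub => hcon k (by omega) (Finset.Subset.antisymm (hmono k) hsub)⟩
          have := Finset.card_lt_card h2
          omega
      have h1 := hgrow c le_rfl
      have h2 := Finset.card_le_univ (O c)
      rw [hcard] at h2
      omega
    obtain ⟨n0, hn0c, hn0⟩ := hstall
    have hstable1 : ∀ m, n0 ≤ m → O m = O (m + 1) := by
      intro m hm
      induction m, hm using Nat.le_induction with
      | base => exact hn0
      | succ m hm ih => exact hstep m ih
    have hstable : ∀ m, n0 ≤ m → O m = O n0 := by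
      intro m hm
      induction m, hm using Nat.le_induction with
      | base => rfl
      | succ m hm ih => rw [← (hstable1 m hm), ih]
    have hchain : ∀ n m : ℕ, n ≤ m → O n ⊆ O m := by
      intro n m hm
      induction m, hm using Nat.le_induction with
      | base => exact Finset.Subset.refl _
      | succ m hm ih => exact ih.trans (hmono m)
    obtain ⟨nP, hP⟩ := hprim
    have hsP : s ∈ O nP := by
      obtain ⟨k, hk, hks⟩ := hP b s
      simp only [hO, Finset.mem_image, Finset.mem_range]
      exact ⟨k, hk, hks⟩
    have hsc : s ∈ O (c - 1) := by
      have h1 : s ∈ O (max nP (c - 1)) := hchain _ _ (le_max_left _ _) hsP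
      have h2 : O (max nP (c - 1)) = O n0 := hstable _ (le_trans (by omega) (le_max_right _ _))
      have h3 : O (c - 1) = O n0 := hstable _ (by omega)
      rw [h2] at h1
      rw [h3]
      exact h1
    simp only [hO, Finset.mem_image, Finset.mem_range] at hsc
    obtain ⟨u, hu, hus⟩ := hsc
    exact ⟨u, hu, hus⟩
  intro n hn b s
  obtain ⟨u, hu, hus⟩ := core b s
  refine ⟨u, ?_, ?_⟩
  · exact lt_of_lt_of_le hu (Nat.pow_le_pow_right hL0 hn)
  · have : n = (c - 1) + (n - (c - 1)) := by omega
    rw [this, spl_pad L hL0 σ hσ0 (c - 1) (n - (c - 1)) b u hu]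
    exact hus

end Aux

section Aux2

variable {A : Type*} [Fintype A]

private lemma pair_decomp (L : ℕ) (hL : 2 ≤ L) (σ : ℕ → Equiv.Perm A) (hσ0 : σ 0 = 1)
    (x : ℕ → A) (hx : SubstFixedPoint L (fun a i => σ i a) x) :
    ∀ a : ℕ, ∃ (t d : ℕ) (s : A), d + 1 < L ∧
      x a = ((σ (L - 1)) ^ t) (σ d s) ∧ x (a + 1) = σ (d + 1) s := by
  have xL : ∀ m, x (L * m) = x m := by
    intro m
    have h := hx m 0 (by omega)
    rw [Nat.add_zero] at h
    rw [h]
    show σ 0 (x m) = x m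
    rw [hσ0, Equiv.Perm.one_apply]
  intro a
  induction a using Nat.strong_induction_on with
  | _ a ih =>
    rcases Nat.lt_or_ge (a % L) (L - 1) with hcase | hcase
    · refine ⟨0, a % L, x (a / L), by omega, ?_, ?_⟩
      · have h := hx (a / L) (a % L) (by omega)
        rw [Nat.div_add_mod] at h
        simpa using h
      · have h2 := hx (a / L) (a % L + 1) (by omega)
        rw [← Nat.add_assoc, Nat.div_add_mod] at h2
        exact h2
    · have hmod : a % L = L - 1 := by
        have := Nat.mod_lt a (show 0 < L by omega)
        omega
      have ha0 : a ≠ 0 := by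
        intro h0
        rw [h0, Nat.zero_mod] at hmod
        omega
      have hdiv : a / L < a := Nat.div_lt_self (by omega) (by omega)
      obtain ⟨t, d, s, hd, h1, h2⟩ := ih (a / L) hdiv
      have hkey : L * (a / L) + (L - 1) = a := by
        rw [← hmod]; exact Nat.div_add_mod a L
      refine ⟨t + 1, d, s, hd, ?_, ?_⟩
      · have h := hx (a / L) (L - 1) (by omega)
        rw [hkey] at h
        rw [h, h1, pow_succ', Equiv.Perm.mul_apply]
      · have e : a + 1 = L * (a / L + 1) := by
          conv_lhs => rw [← hkey]
          rw [Nat.mul_add, Nat.mul_one, Nat.add_assoc]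
          congr 1
          omega
        rw [e, xL, h2]

private lemma perm_pow_small (c : ℕ) (hc : 1 ≤ c) (hcard : Fintype.card A = c)
    (τ : Equiv.Perm A) (u : A) :
    ∀ t : ℕ, ∃ t', t' < c ∧ (τ ^ t') u = (τ ^ t) u := by
  -- find a period p ≤ c
  have hni : ¬ Function.Injective (fun k : Fin (c + 1) => (τ ^ (k : ℕ)) u) := by
    intro hinj
    have := Fintype.card_le_of_injective _ hinj
    rw [hcard, Fintype.card_fin] at this
    omega
  obtain ⟨i, j, hij, hne⟩ := Function.not_injective_iff.1 hni
  have hper : ∃ p, 1 ≤ p ∧ p ≤ c ∧ (τ ^ p) u = u := by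
    rcases Nat.lt_or_ge (i : ℕ) (j : ℕ) with hlt | hge
    · refine ⟨(j : ℕ) - (i : ℕ), by omega, by have := j.isLt; omega, ?_⟩
      have hj : (j : ℕ) = (i : ℕ) + ((j : ℕ) - (i : ℕ)) := by omega
      have h2 : (τ ^ (i : ℕ)) ((τ ^ ((j : ℕ) - (i : ℕ))) u) = (τ ^ (i : ℕ)) u := by
        rw [← Equiv.Perm.mul_apply, ← pow_add, ← hj]
        exact hij.symm
      exact (τ ^ (i : ℕ)).injective h2
    · have hlt : (j : ℕ) < (i : ℕ) := by
        rcases Nat.lt_or_ge (j : ℕ) (i : ℕ) with h | h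
        · exact h
        · exact absurd (Fin.ext (by omega)) hne
      refine ⟨(i : ℕ) - (j : ℕ), by omega, by have := i.isLt; omega, ?_⟩
      have hj : (i : ℕ) = (j : ℕ) + ((i : ℕ) - (j : ℕ)) := by omega
      have h2 : (τ ^ (j : ℕ)) ((τ ^ ((i : ℕ) - (j : ℕ))) u) = (τ ^ (j : ℕ)) u := by
        rw [← Equiv.Perm.mul_apply, ← pow_add, ← hj]
        exact hij
      exact (τ ^ (j : ℕ)).injective h2
  obtain ⟨p, hp1, hpc, hp⟩ := hper
  have hmodred : ∀ t : ℕ, (τ ^ t) u = (τ ^ (t % p)) u := by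
    intro t
    induction t using Nat.strong_induction_on with
    | _ t ih =>
      rcases Nat.lt_or_ge t p with h | h
      · rw [Nat.mod_eq_of_lt h]
      · have e : t = (t - p) + p := by omega
        have h2 : (τ ^ t) u = (τ ^ (t - p)) u := by
          conv_lhs => rw [e]
          rw [pow_add, Equiv.Perm.mul_apply, hp]
        rw [h2, ih (t - p) (by omega), Nat.mod_eq_sub_mod h]
  intro t
  exact ⟨t % p, lt_of_lt_of_le (Nat.mod_lt t (by omega)) hpc, (hmodred t).symm⟩

private lemma spl_boundary (L : ℕ) (hL : 2 ≤ L) (σ : ℕ → Equiv.Perm A) (hσ0 : σ 0 = 1) :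
    ∀ (t n : ℕ) (b : A) (d u : ℕ), d + 1 < L → u < L ^ n →
      (substPowLetter L (fun a i => σ i a) (t + 1 + n) b
          (u * L ^ (t + 1) + d * L ^ t + (L ^ t - 1)) =
        ((σ (L - 1)) ^ t) (σ d (substPowLetter L (fun a i => σ i a) n b u)) ∧
      substPowLetter L (fun a i => σ i a) (t + 1 + n) b
          (u * L ^ (t + 1) + (d + 1) * L ^ t) =
        σ (d + 1) (substPowLetter L (fun a i => σ i a) n b u)) := by
  have hL0 : 0 < L := by omega
  intro t
  induction t with
  | zero =>
    intro n b d u hd hu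
    have e0 : (0 : ℕ) + 1 + n = n + 1 := by omega
    rw [e0]
    have ej : u * L ^ (0 + 1) + d * L ^ 0 + (L ^ 0 - 1) = L * u + d := by
      simp [pow_one, pow_zero]; ring
    have ej2 : u * L ^ (0 + 1) + (d + 1) * L ^ 0 = L * u + (d + 1) := by
      simp [pow_one, pow_zero]; ring
    constructor
    · rw [ej]
      show σ ((L * u + d) % L) (substPowLetter L (fun a i => σ i a) n b ((L * u + d) / L)) = _
      rw [Nat.mul_add_mod, Nat.mod_eq_of_lt (by omega), Nat.mul_add_div hL0,
        Nat.div_eq_of_lt (by omega)]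
      simp
    · rw [ej2]
      show σ ((L * u + (d + 1)) % L)
        (substPowLetter L (fun a i => σ i a) n b ((L * u + (d + 1)) / L)) = _
      rw [Nat.mul_add_mod, Nat.mod_eq_of_lt (by omega), Nat.mul_add_div hL0,
        Nat.div_eq_of_lt (by omega)]
      simp
  | succ t ih =>
    intro n b d u hd hu
    have hLt : 1 ≤ L ^ t := Nat.one_le_pow _ _ hL0
    have eidx : t + 1 + 1 + n = (t + 1 + n) + 1 := by omega
    obtain ⟨IH1, IH2⟩ := ih n b d u hd hu
    have h4 : L ≤ L ^ (t + 1) := by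
      calc L = L ^ 1 := (pow_one L).symm
        _ ≤ L ^ (t + 1) := Nat.pow_le_pow_right hL0 (by omega)
    have h1 : L * (L ^ t - 1) + (L - 1) = L ^ (t + 1) - 1 := by
      rw [Nat.mul_sub, Nat.mul_one, ← pow_succ']
      omega
    have h2 : L * (u * L ^ (t + 1)) = u * L ^ (t + 1 + 1) := by ring
    have h3 : L * (d * L ^ t) = d * L ^ (t + 1) := by ring
    constructor
    · set M := u * L ^ (t + 1) + d * L ^ t + (L ^ t - 1) with hM
      have emod : (L * M + (L - 1)) % L = L - 1 := by
        rw [Nat.mul_add_mod]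
        exact Nat.mod_eq_of_lt (by omega)
      have ediv : (L * M + (L - 1)) / L = M := by
        rw [Nat.mul_add_div hL0, Nat.div_eq_of_lt (by omega), Nat.add_zero]
      have ej : u * L ^ (t + 1 + 1) + d * L ^ (t + 1) + (L ^ (t + 1) - 1) =
          L * M + (L - 1) := by
        rw [hM, Nat.mul_add, Nat.mul_add, h2, h3]
        conv_rhs => rw [Nat.add_assoc, h1]
      rw [ej, eidx]
      show σ ((L * M + (L - 1)) % L)
        (substPowLetter L (fun a i => σ i a) (t + 1 + n) b ((L * M + (L - 1)) / L)) = _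
      rw [emod, ediv, IH1, pow_succ', Equiv.Perm.mul_apply]
    · set M := u * L ^ (t + 1) + (d + 1) * L ^ t with hM
      have ej : u * L ^ (t + 1 + 1) + (d + 1) * L ^ (t + 1) = L * M := by
        rw [hM]; ring
      rw [ej, eidx]
      show σ ((L * M) % L)
        (substPowLetter L (fun a i => σ i a) (t + 1 + n) b ((L * M) / L)) = _
      rw [Nat.mul_mod_right, Nat.mul_div_cancel_left _ hL0, hσ0, Equiv.Perm.one_apply, IH2]

end Aux2

section Aux3

variable {A : Type*} [Fintype A]

private lemma pair_recur (c L : ℕ) (hc : 2 ≤ c) (hL : 2 ≤ L) (hcard : Fintype.card A = c)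
    (σ : ℕ → Equiv.Perm A) (hσ0 : σ 0 = 1)
    (hprim : SubstPrimitive L (fun a i => σ i a))
    (x : ℕ → A) (hx : SubstFixedPoint L (fun a i => σ i a) x) :
    ∀ a e0 : ℕ, ∃ a', e0 ≤ a' ∧ a' + 1 ≤ e0 + 2 * L ^ (2 * c - 1) ∧
      x a' = x a ∧ x (a' + 1) = x (a + 1) := by
  have hL0 : 0 < L := by omega
  intro a e0
  obtain ⟨t, d, s, hd, hxa, hxa1⟩ := pair_decomp L hL σ hσ0 x hx a
  obtain ⟨t', ht'c, ht'⟩ := perm_pow_small c (by omega) hcard (σ (L - 1)) (σ d s) t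
  have hLt : 1 ≤ L ^ t' := Nat.one_le_pow _ _ hL0
  obtain ⟨E0, p0, he0, hp0⟩ : ∃ E0 p0, e0 = L ^ (2 * c - 1) * E0 + p0 ∧ p0 < L ^ (2 * c - 1) :=
    ⟨e0 / L ^ (2 * c - 1), e0 % L ^ (2 * c - 1), by rw [Nat.div_add_mod],
      Nat.mod_lt _ (pow_pos hL0 _)⟩
  set e := E0 + 1 with he
  set n1 := 2 * c - 1 - t' - 1 with hn1
  obtain ⟨u, hu, hus⟩ := orbit_full c L hc hL hcard σ hσ0 hprim n1 (by omega) (x e) s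
  have hNsum : t' + 1 + n1 = 2 * c - 1 := by omega
  obtain ⟨h6a, h6b⟩ := spl_boundary L hL σ hσ0 t' n1 (x e) d u hd hu
  rw [hNsum] at h6a h6b
  set j := u * L ^ (t' + 1) + d * L ^ t' + (L ^ t' - 1) with hj
  have hj1 : j + 1 = u * L ^ (t' + 1) + (d + 1) * L ^ t' := by
    rw [hj, Nat.add_mul, Nat.one_mul]
    omega
  have hj1K : j + 1 + L ^ t' ≤ L ^ (2 * c - 1) := by
    rw [hj1]
    have s1 : (d + 2) * L ^ t' ≤ L * L ^ t' := Nat.mul_le_mul_right _ (by omega)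
    have s2 : (u + 1) * L ^ (t' + 1) ≤ L ^ n1 * L ^ (t' + 1) :=
      Nat.mul_le_mul_right _ (by omega)
    have s3 : L * L ^ t' = L ^ (t' + 1) := (pow_succ' L t').symm
    have s4 : L ^ n1 * L ^ (t' + 1) = L ^ (2 * c - 1) := by
      rw [← pow_add]
      congr 1
      omega
    have s5 : (d + 2) * L ^ t' = (d + 1) * L ^ t' + L ^ t' := by ring
    have s6 : (u + 1) * L ^ (t' + 1) = u * L ^ (t' + 1) + L ^ (t' + 1) := by ring
    omega
  have hjK : j + 1 < L ^ (2 * c - 1) := by omega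
  have hxa' : x (e * L ^ (2 * c - 1) + j) = x a := by
    rw [fixed_point_block L hL0 σ x hx (2 * c - 1) e j (by omega), h6a, hus, ht']
    exact hxa.symm
  have hxa'1 : x (e * L ^ (2 * c - 1) + j + 1) = x (a + 1) := by
    rw [Nat.add_assoc, fixed_point_block L hL0 σ x hx (2 * c - 1) e (j + 1) hjK, hj1, h6b, hus]
    exact hxa1.symm
  clear_value e n1 j
  have hKpos : 0 < L ^ (2 * c - 1) := pow_pos hL0 _
  refine ⟨e * L ^ (2 * c - 1) + j, ?_, ?_, hxa', hxa'1⟩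
  · have hd3 : e * L ^ (2 * c - 1) = L ^ (2 * c - 1) * E0 + L ^ (2 * c - 1) := by
      rw [he]; ring
    omega
  · have hd3 : e * L ^ (2 * c - 1) = L ^ (2 * c - 1) * E0 + L ^ (2 * c - 1) := by
      rw [he]; ring
    omega

end Aux3

/-- via Wielandt's bound for the level-2 induced substitution:
`R = 2L^{c⁴−2c²+3} − L` is a linear recurrence constant for every fixed point
of every aperiodic, primitive, bijective length-`L` substitution on `c`
letters with identity zeroth column. -/
theorem linear_recurrence_constant_bound {A : Type*} [Fintype A]
    (c L : ℕ) (hc : 2 ≤ c) (hL : 2 ≤ L) (hcard : Fintype.card A = c)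
    (σ : ℕ → Equiv.Perm A) (hσ0 : σ 0 = 1)
    (hprim : SubstPrimitive L (fun a i => σ i a))
    (haper : SubstAperiodic L (fun a i => σ i a))
    (x : ℕ → A) (hx : SubstFixedPoint L (fun a i => σ i a) x) :
    LinearRecurrenceConstant x (2 * L ^ (c ^ 4 - 2 * c ^ 2 + 3) - L) := by
  intro q len hlen m
  have hL0 : 0 < L := by omega
  obtain ⟨n, hlenK, hKle⟩ : ∃ n, len ≤ L ^ n ∧ L ^ n ≤ L * len := by
    rcases Nat.lt_or_ge len 2 with h1 | h1
    · refine ⟨0, by rw [pow_zero]; omega, ?_⟩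
      rw [pow_zero]
      calc 1 ≤ L := by omega
        _ ≤ L * len := Nat.le_mul_of_pos_right L (by omega)
    · refine ⟨Nat.clog L len, Nat.le_pow_clog (by omega) _, ?_⟩
      have hc1 : 0 < Nat.clog L len := Nat.clog_pos (by omega) (by omega)
      have h2 : L ^ (Nat.clog L len - 1) < len := Nat.pow_pred_clog_lt_self (by omega) (by omega)
      have h3 : L ^ Nat.clog L len = L * L ^ (Nat.clog L len - 1) := by
        rw [← pow_succ']
        congr 1
        omega
      rw [h3]
      exact Nat.mul_le_mul_left L (by omega)
  obtain ⟨Q, r, hQr, hrK⟩ : ∃ Q r, q = L ^ n * Q + r ∧ r < L ^ n :=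
    ⟨q / L ^ n, q % L ^ n, by rw [Nat.div_add_mod], Nat.mod_lt _ (pow_pos hL0 n)⟩
  obtain ⟨M, rm, hMr, hrmK⟩ : ∃ M rm, m = L ^ n * M + rm ∧ rm < L ^ n :=
    ⟨m / L ^ n, m % L ^ n, by rw [Nat.div_add_mod], Nat.mod_lt _ (pow_pos hL0 n)⟩
  obtain ⟨a', ha'lb, ha'ub, hxa, hxa1⟩ :=
    pair_recur c L hc hL hcard σ hσ0 hprim x hx Q (M + 1)
  refine ⟨a' * L ^ n + r, ?_, ?_, ?_⟩
  · have s1 : (M + 1) * L ^ n ≤ a' * L ^ n := Nat.mul_le_mul_right _ ha'lb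
    have s2 : (M + 1) * L ^ n = L ^ n * M + L ^ n := by ring
    omega
  · have hE : 2 * c + 1 ≤ c ^ 4 - 2 * c ^ 2 + 3 := by
      have hA : 4 ≤ c ^ 2 := by
        calc 4 = 2 ^ 2 := by norm_num
          _ ≤ c ^ 2 := Nat.pow_le_pow_left hc 2
      have hB : c ≤ c ^ 2 := Nat.le_self_pow (by omega) c
      have h1 : 2 * c ^ 2 + 2 * c ≤ c ^ 4 := by
        calc 2 * c ^ 2 + 2 * c ≤ 2 * c ^ 2 + 2 * c ^ 2 := by omega
          _ = 4 * c ^ 2 := by ring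
          _ ≤ c ^ 2 * c ^ 2 := Nat.mul_le_mul_right _ hA
          _ = c ^ 4 := by ring
      obtain ⟨C2, hC2⟩ : ∃ y, c ^ 2 = y := ⟨_, rfl⟩
      obtain ⟨C4, hC4⟩ : ∃ y, c ^ 4 = y := ⟨_, rfl⟩
      rw [hC2, hC4] at h1 ⊢
      omega
    set E := c ^ 4 - 2 * c ^ 2 + 3 with hEdef
    have k2 : L ^ 2 ≤ L ^ (2 * c) := Nat.pow_le_pow_right hL0 (by omega)
    have k3 : 2 * L ≤ L ^ 2 := by nlinarith [sq_nonneg L, hL]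
    have k1 : L ^ (2 * c + 1) = L ^ (2 * c) * L := pow_succ L (2 * c)
    have k5 : L ^ (2 * c) * 2 ≤ L ^ (2 * c) * L := Nat.mul_le_mul_left _ (by omega)
    have k4 : L ^ (2 * c + 1) ≤ L ^ E := Nat.pow_le_pow_right hL0 hE
    have k6 : 1 ≤ L ^ (2 * c) := Nat.one_le_pow _ _ hL0
    have hscal : 2 * L ^ (2 * c) + 2 * L + 1 ≤ 2 * L ^ E := by omega
    have c0 : a' ≤ M + 2 * L ^ (2 * c - 1) := by omega
    have c1 : a' * L ^ n ≤ (M + 2 * L ^ (2 * c - 1)) * L ^ n := Nat.mul_le_mul_right _ c0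
    have c2 : (M + 2 * L ^ (2 * c - 1)) * L ^ n =
        M * L ^ n + 2 * (L ^ (2 * c - 1) * L ^ n) := by ring
    have c3 : L ^ (2 * c - 1) * L ^ n ≤ L ^ (2 * c - 1) * (L * len) :=
      Nat.mul_le_mul_left _ hKle
    have c4 : L ^ (2 * c - 1) * (L * len) = L ^ (2 * c) * len := by
      rw [← Nat.mul_assoc, ← pow_succ, show 2 * c - 1 + 1 = 2 * c from by omega]
    have c6 : M * L ^ n = L ^ n * M := by ring
    have c8 : (2 * L ^ (2 * c) + L + 1) * len ≤ (2 * L ^ E - L) * len :=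
      Nat.mul_le_mul_right _ (by omega)
    have c9 : (2 * L ^ (2 * c) + L + 1) * len =
        2 * (L ^ (2 * c) * len) + L * len + len := by ring
    omega
  · intro i hi
    have hiK : i < L ^ n := lt_of_lt_of_le hi hlenK
    rcases Nat.lt_or_ge (r + i) (L ^ n) with hcase | hcase
    · have e1 : q + i = Q * L ^ n + (r + i) := by rw [hQr]; ring
      have e2 : a' * L ^ n + r + i = a' * L ^ n + (r + i) := by ring
      rw [e1, e2, fixed_point_block L hL0 σ x hx n Q (r + i) hcase,
        fixed_point_block L hL0 σ x hx n a' (r + i) hcase, hxa]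
    · have hlt2 : r + i - L ^ n < L ^ n := by omega
      have hsplit : r + i = L ^ n + (r + i - L ^ n) := by omega
      have e1 : q + i = (Q + 1) * L ^ n + (r + i - L ^ n) := by
        rw [hQr, Nat.add_assoc]
        conv_lhs => rw [hsplit]
        ring
      have e2 : a' * L ^ n + r + i = (a' + 1) * L ^ n + (r + i - L ^ n) := by
        rw [Nat.add_assoc]
        conv_lhs => rw [hsplit]
        ring
      rw [e1, e2, fixed_point_block L hL0 σ x hx n (Q + 1) _ hlt2,
        fixed_point_block L hL0 σ x hx n (a' + 1) _ hlt2, hxa1]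
end

section
/- Fix c, L ≥ 2 and M ≥ 1, and let k = ⌈log_L M⌉, R = 2L^{c⁴−2c²+3} − L. Then every subword of length (R+1)·L^{k·c!} of any fixed point of an aperiodic, primitive, bijective length-L substitution on c letters with identity zeroth column contains a monochromatic arithmetic progression of length M. -/
/-!
Iterating the fixed-point equation gives `x (L^n m + r) = (ρⁿ (x m))_r` for `r < L^n`. Reading
the position `m L^{kt} + j (1 + L^k + ⋯ + L^{k(t-1)})` in base `L^k` as the digits `m, j, …, j`,
the letter there is `f_j^t (x m)`, where `f_j` is the `j`-th column of `ρ^k`. For a bijective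
substitution the columns are permutations of the `c` letters, so `f_j^{c!} = id`: starting at every
multiple `m N` of `N = L^{k c!}` there is a monochromatic progression of length `L^k` and difference
`d = ∑_{i < c!} L^{k i}`, occupying `(L^k - 1) d + 1 = N` positions. Every window of length
`2N ≤ (R + 1) N` contains one of these blocks, and `M ≤ L^k` for `k = ⌈log_L M⌉`.
-/

open Function Finset

theorem Function.Injective.iterate_factorial_card_eq_id {A : Type*} [Fintype A] {f : A → A}
    (hf : Injective f) : f^[(Fintype.card A).factorial] = id := by
  classical
  have h := pow_card_eq_one (x := Equiv.ofBijective f hf.bijective_of_finite)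
  rw [Fintype.card_perm] at h
  simpa [Equiv.Perm.coe_pow] using congrArg DFunLike.coe h

section Substitution

variable {A : Type*} {L : ℕ} {ρ : A → ℕ → A} {x : ℕ → A}

theorem substPowLetter_injective (hρ : ∀ i, Injective (ρ · i)) (n r : ℕ) :
    Injective (substPowLetter L ρ n · r) := by
  induction n generalizing r with
  | zero => exact injective_id
  | succ n ih => exact (hρ _).comp (ih _)

theorem SubstFixedPoint.apply_pow_mul_add (hx : SubstFixedPoint L ρ x) (n : ℕ) {r : ℕ}
    (hr : r < L ^ n) (m : ℕ) : x (L ^ n * m + r) = substPowLetter L ρ n (x m) r := by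
  induction n generalizing r m with
  | zero =>
    obtain rfl : r = 0 := by simpa using hr
    simp [substPowLetter]
  | succ n ih =>
    have hL : 0 < L := Nat.pos_of_ne_zero (by rintro rfl; simp at hr)
    have hdiv : r / L < L ^ n := by rwa [Nat.div_lt_iff_lt_mul hL, ← pow_succ]
    have hpos : L ^ (n + 1) * m + r = L * (L ^ n * m + r / L) + r % L := by
      have := Nat.div_add_mod r L
      rw [pow_succ]
      ring_nf
      omega
    rw [hpos, hx _ _ (Nat.mod_lt _ hL), ih hdiv]
    rfl

theorem SubstFixedPoint.apply_mul_add_mul_geom_sum (hx : SubstFixedPoint L ρ x) {k j : ℕ}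
    (hj : j < L ^ k) (t m : ℕ) :
    x (m * L ^ (k * t) + j * ∑ i ∈ range t, L ^ (k * i)) =
      (substPowLetter L ρ k · j)^[t] (x m) := by
  induction t generalizing m with
  | zero => simp
  | succ t ih =>
    have hpos : m * L ^ (k * (t + 1)) + j * ∑ i ∈ range (t + 1), L ^ (k * i) =
        (L ^ k * m + j) * L ^ (k * t) + j * ∑ i ∈ range t, L ^ (k * i) := by
      rw [sum_range_succ, mul_add_one k t, pow_add]
      ring
    rw [hpos, ih, hx.apply_pow_mul_add k hj, iterate_succ_apply]

theorem SubstFixedPoint.exists_monochromatic_progression [Fintype A] (hL : 0 < L)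
    (hρ : ∀ i, Injective (ρ · i)) (hx : SubstFixedPoint L ρ x) (k s : ℕ) :
    ∃ p d, 1 ≤ d ∧ s ≤ p ∧ p + (L ^ k - 1) * d < s + 2 * L ^ (k * (Fintype.card A).factorial) ∧
      ∀ j < L ^ k, x (p + j * d) = x p := by
  set N := L ^ (k * (Fintype.card A).factorial)
  set d := ∑ i ∈ range (Fintype.card A).factorial, L ^ (k * i)
  have hmono : ∀ m, ∀ j < L ^ k, x (m * N + j * d) = x m := fun m j hj => by
    rw [hx.apply_mul_add_mul_geom_sum hj,
      (substPowLetter_injective hρ k j).iterate_factorial_card_eq_id, id]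
  have hd : 1 ≤ d :=
    sum_pos (fun i _ => pow_pos hL _) (nonempty_range_iff.2 (Nat.factorial_ne_zero _))
  have hgeom : (L ^ k - 1) * d + 1 = N := by
    have h := geom_sum_mul_add (L ^ k - 1) (Fintype.card A).factorial
    rw [Nat.sub_add_cancel (Nat.one_le_pow _ _ hL)] at h
    simpa only [d, N, ← pow_mul, mul_comm] using h
  have hN : 0 < N := pow_pos hL _
  set p := (s / N + 1) * N
  have hsp : s < p := by
    simpa only [p, add_mul, one_mul] using Nat.lt_div_mul_add (a := s) hN
  have hps : p ≤ s + N := by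
    simp only [p, add_mul, one_mul]
    exact Nat.add_le_add_right (Nat.div_mul_le_self s N) N
  refine ⟨p, d, hd, hsp.le, by omega, fun j hj => ?_⟩
  rw [hmono _ j hj, ← hmono _ 0 (pow_pos hL k), zero_mul, add_zero]

end Substitution

theorem vdW_type_bound_general {A : Type*} [Fintype A]
    (c L M : ℕ) (hL : 2 ≤ L)
    (hcard : Fintype.card A = c)
    (σ : ℕ → Equiv.Perm A)
    (x : ℕ → A) (hx : SubstFixedPoint L (fun a i => σ i a) x) :
    ∀ s : ℕ, ∃ p d, 1 ≤ d ∧ s ≤ p ∧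
      p + (M - 1) * d <
        s + (2 * L ^ (c ^ 4 - 2 * c ^ 2 + 3) - L + 1) *
          L ^ (Nat.clog L M * Nat.factorial c) ∧
      ∀ j < M, x (p + j * d) = x p := by
  intro s
  obtain ⟨p, d, hd, hsp, hlen, hmono⟩ :=
    hx.exists_monochromatic_progression (by omega) (fun i => (σ i).injective) (Nat.clog L M) s
  rw [hcard] at hlen
  have hMk : M ≤ L ^ Nat.clog L M := Nat.le_pow_clog hL M
  have hR : 2 ≤ 2 * L ^ (c ^ 4 - 2 * c ^ 2 + 3) - L + 1 := by
    have : L ≤ L ^ (c ^ 4 - 2 * c ^ 2 + 3) := Nat.le_self_pow (by omega) L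
    omega
  refine ⟨p, d, hd, hsp, ?_, fun j hj => hmono j (by omega)⟩
  calc p + (M - 1) * d ≤ p + (L ^ Nat.clog L M - 1) * d := by gcongr
    _ < s + 2 * L ^ (Nat.clog L M * Nat.factorial c) := hlen
    _ ≤ _ := by gcongr

/-- van der Waerden-type bound: with `k = ⌈log_L M⌉` and
`R = 2L^{c⁴−2c²+3} − L`, every subword of length `(R+1)·L^{k·c!}` of any
fixed point of an aperiodic, primitive, bijective length-`L` substitution on
`c` letters with identity zeroth column contains a monochromatic arithmetic
progression of length `M`. -/
theorem vdW_type_bound {A : Type*} [Fintype A]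
    (c L M : ℕ) (hc : 2 ≤ c) (hL : 2 ≤ L) (hM : 1 ≤ M)
    (hcard : Fintype.card A = c)
    (σ : ℕ → Equiv.Perm A) (hσ0 : σ 0 = 1)
    (hprim : SubstPrimitive L (fun a i => σ i a))
    (haper : SubstAperiodic L (fun a i => σ i a))
    (x : ℕ → A) (hx : SubstFixedPoint L (fun a i => σ i a) x) :
    ∀ s : ℕ, ∃ p d, 1 ≤ d ∧ s ≤ p ∧
      p + (M - 1) * d <
        s + (2 * L ^ (c ^ 4 - 2 * c ^ 2 + 3) - L + 1) *
          L ^ (Nat.clog L M * Nat.factorial c) ∧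
      ∀ j < M, x (p + j * d) = x p :=
  vdW_type_bound_general c L M hL hcard σ x hx
end

section
/- Let ρ be an aperiodic primitive bijective length-L substitution with ρ_0 = id and Abelian column group, v a fixed point, N = min{n : all legal 2-letter words appear in ρ^n(a) for every letter a}. Let d ≥ 1, M ≥ 1 with d ≤ L^M, and suppose gcd(d, L^M) = gcd(d, L^{N+M}) =: ℓ. If there is n ≥ 0 with v_n = v_{n+jd} for all 0 ≤ j ≤ L^{N+M}/ℓ, then v_n = v_{n+jd} for all j ∈ ℕ (an infinite monochromatic progression). Consequently A(d) ≤ L^{N+M}/ℓ. -/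
/-- `(x, y)` is a legal two-letter word of `ρ`: it occurs in some `ρ^n(b)`. -/
def Legal2 {A : Type*} (L : ℕ) (ρ : A → ℕ → A) (x y : A) : Prop :=
  ∃ (b : A) (n k : ℕ), k + 1 < L ^ n ∧
    substPowLetter L ρ n b k = x ∧ substPowLetter L ρ n b (k + 1) = y

/-- Every legal two-letter word of `ρ` occurs in `ρ^N(a)` for every letter `a`. -/
def ContainsAllLegal2 {A : Type*} (L : ℕ) (ρ : A → ℕ → A) (N : ℕ) : Prop :=
  ∀ (a x y : A), Legal2 L ρ x y → ∃ k, k + 1 < L ^ N ∧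
    substPowLetter L ρ N a k = x ∧ substPowLetter L ρ N a (k + 1) = y

section AUBhelp

variable {A : Type*}

/-- columns of the `n`-th power of the substitution. -/
def acol (L : ℕ) (σ : ℕ → Equiv.Perm A) : ℕ → ℕ → Equiv.Perm A
  | 0, _ => 1
  | n+1, k => σ (k % L) * acol L σ n (k / L)

lemma acol_zero (L : ℕ) (σ : ℕ → Equiv.Perm A) (hσ0 : σ 0 = 1) :
    ∀ n, acol L σ n 0 = 1
  | 0 => rfl
  | n+1 => by
      show σ (0 % L) * acol L σ n (0 / L) = 1
      rw [Nat.zero_mod, Nat.zero_div, hσ0, acol_zero L σ hσ0 n, one_mul]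

lemma acol_small (L : ℕ) (σ : ℕ → Equiv.Perm A) (hσ0 : σ 0 = 1)
    (n : ℕ) {i : ℕ} (hi : i < L) : acol L σ (n+1) i = σ i := by
  show σ (i % L) * acol L σ n (i / L) = σ i
  rw [Nat.mod_eq_of_lt hi, Nat.div_eq_of_lt hi, acol_zero L σ hσ0 n, mul_one]

lemma substPow_eq_acol (L : ℕ) (σ : ℕ → Equiv.Perm A) :
    ∀ (n : ℕ) (a : A) (k : ℕ),
      substPowLetter L (fun a i => σ i a) n a k = acol L σ n k a
  | 0, a, k => rfl
  | n+1, a, k => by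
      show σ (k % L) (substPowLetter L (fun a i => σ i a) n a (k / L)) = _
      rw [substPow_eq_acol L σ n a (k / L)]
      rfl

lemma acol_mem (L : ℕ) (σ : ℕ → Equiv.Perm A) (hL : 0 < L)
    (S : Subgroup (Equiv.Perm A)) (hgen : ∀ i, i < L → σ i ∈ S) :
    ∀ n k, acol L σ n k ∈ S
  | 0, k => one_mem S
  | n+1, k => mul_mem (hgen _ (Nat.mod_lt _ hL)) (acol_mem L σ hL S hgen n (k / L))

lemma vdecomp (L : ℕ) (σ : ℕ → Equiv.Perm A) (hL : 0 < L)
    (v : ℕ → A) (hv : SubstFixedPoint L (fun a i => σ i a) v) :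
    ∀ (K x : ℕ), v x = acol L σ K (x % L^K) (v (x / L^K))
  | 0, x => by simp [acol, pow_zero, Nat.mod_one, Nat.div_one]
  | K+1, x => by
      have h1 : v x = σ (x % L) (v (x / L)) := by
        have h := hv (x / L) (x % L) (Nat.mod_lt _ hL)
        rwa [Nat.div_add_mod] at h
      have h2 := vdecomp L σ hL v hv K (x / L)
      have e1 : x % L^(K+1) % L = x % L :=
        Nat.mod_mod_of_dvd x (dvd_pow_self L (Nat.succ_ne_zero K))
      have e2 : x % L^(K+1) / L = x / L % L^K := by
        rw [pow_succ']
        exact Nat.mod_mul_right_div_self x L (L^K)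
      have e3 : x / L^(K+1) = x / L / L^K := by
        rw [Nat.div_div_eq_div_mul, pow_succ']
      show v x = (σ (x % L^(K+1) % L) * acol L σ K (x % L^(K+1) / L)) (v (x / L^(K+1)))
      rw [e1, e2, e3, h1, h2]
      rfl

lemma vpos (L : ℕ) (σ : ℕ → Equiv.Perm A) (hL : 0 < L)
    (v : ℕ → A) (hv : SubstFixedPoint L (fun a i => σ i a) v)
    (K q k : ℕ) (hk : k < L^K) :
    v (q * L^K + k) = acol L σ K k (v q) := by
  have h := vdecomp L σ hL v hv K (q * L^K + k)
  have hp : 0 < L^K := pow_pos hL K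
  have e1 : (q * L^K + k) % L^K = k := by
    rw [mul_comm, Nat.mul_add_mod, Nat.mod_eq_of_lt hk]
  have e2 : (q * L^K + k) / L^K = q := by
    rw [mul_comm, Nat.mul_add_div hp, Nat.div_eq_of_lt hk, add_zero]
  rwa [e1, e2] at h

/-- discrete intermediate value for nondecreasing unit-step functions -/
lemma aub_ivt (f : ℕ → ℕ) :
    ∀ (T : ℕ), (∀ t, t < T → f t ≤ f (t+1) ∧ f (t+1) ≤ f t + 1) →
      ∀ c, f 0 ≤ c → c ≤ f T → ∃ j, j ≤ T ∧ f j = c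
  | 0, _, c, h0, hT => ⟨0, le_rfl, le_antisymm h0 hT⟩
  | T+1, hstep, c, h0, hT => by
      rcases le_or_gt c (f T) with h | h
      · obtain ⟨j, hj, hfj⟩ := aub_ivt f T (fun t ht => hstep t (by omega)) c h0 h
        exact ⟨j, by omega, hfj⟩
      · refine ⟨T+1, le_rfl, ?_⟩
        have := (hstep T (by omega)).2
        omega

lemma aub_bez (a n : ℕ) (ha : 1 ≤ a) (hn : 2 ≤ n) (h : Nat.gcd a n = 1) :
    ∃ t c : ℕ, 1 ≤ t ∧ t * a = 1 + c * n := by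
  have hb := Nat.gcd_eq_gcd_ab a n
  rw [h] at hb
  set x := Nat.gcdA a n with hx
  set y := Nat.gcdB a n with hy
  set K : ℤ := (x.natAbs : ℤ) + 1 with hK
  set t : ℤ := x + K * n with ht
  have hxabs : -(x.natAbs : ℤ) ≤ x := by
    rw [← Int.abs_eq_natAbs]; exact neg_abs_le x
  have hn' : (1:ℤ) ≤ (n:ℤ) := by exact_mod_cast (by omega : 1 ≤ n)
  have hKn : K * 1 ≤ K * n := by
    apply mul_le_mul_of_nonneg_left hn' (by positivity)
  have ht1 : (1:ℤ) ≤ t := by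
    have : K * 1 ≤ K * n := hKn
    simp only [ht, hK] at *
    omega
  set c' : ℤ := a * K - y with hc'
  have hc : (a:ℤ) * t = 1 + n * c' := by
    simp only [ht, hc']
    linear_combination (-1 : ℤ) * hb
  have hat : (1:ℤ) ≤ a * t := by
    have ha' : (1:ℤ) ≤ a := by exact_mod_cast ha
    nlinarith
  have hc0 : 0 ≤ c' := by nlinarith
  have ht0 : 0 ≤ t := by linarith
  refine ⟨t.toNat, c'.toNat, ?_, ?_⟩
  · omega
  · have : ((t.toNat * a : ℕ) : ℤ) = ((1 + c'.toNat * n : ℕ) : ℤ) := by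
      push_cast [Int.toNat_of_nonneg ht0, Int.toNat_of_nonneg hc0]
      linarith [hc]
    exact_mod_cast this

end AUBhelp
section W
variable {A : Type*}

lemma free_of (S : Subgroup (Equiv.Perm A))
    (hcomm : ∀ g ∈ S, ∀ h ∈ S, g * h = h * g)
    (htrans : ∀ a b : A, ∃ g ∈ S, g a = b)
    {g h : Equiv.Perm A} (hg : g ∈ S) (hh : h ∈ S) (a : A) (hga : g a = h a) :
    g = h := by
  ext b
  obtain ⟨f, hf, rfl⟩ := htrans a b
  have h1 : g * f = f * g := hcomm g hg f hf
  have h2 : h * f = f * h := hcomm h hh f hf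
  calc g (f a) = (g * f) a := rfl
    _ = (f * g) a := by rw [h1]
    _ = f (g a) := rfl
    _ = f (h a) := by rw [hga]
    _ = (h * f) a := by rw [h2]; rfl
    _ = h (f a) := rfl

lemma aub_moddiv {n : ℕ} (hn : 0 < n) (z q s : ℕ) (hs : s < n) (hz : z = n * q + s) :
    z % n = s ∧ z / n = q := by
  subst hz
  exact ⟨by rw [Nat.mul_add_mod, Nat.mod_eq_of_lt hs],
    by rw [Nat.mul_add_div hn, Nat.div_eq_of_lt hs, add_zero]⟩

lemma aub_walk {G : Type*} [CommGroup G] (n eb : ℕ) (heb : 0 < eb) (hebn : eb < n)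
    (C : ℕ → G)
    (R1 : ∀ k, k + eb < n → C (k + eb) = C k * C eb)
    (R2 : ∀ k, k < n → n ≤ k + eb → C (k + eb - n) = C k * (C (n - eb))⁻¹) :
    ∀ t k, k < n → C ((k + t * eb) % n) =
      C k * (C eb) ^ ((t : ℤ) - ((k + t * eb) / n : ℕ)) *
        ((C (n - eb)) ^ (((k + t * eb) / n : ℕ) : ℤ))⁻¹ := by
  have hn : 0 < n := lt_trans heb hebn
  intro t
  induction t with
  | zero =>
      intro k hk
      simp [Nat.mod_eq_of_lt hk, Nat.div_eq_of_lt hk]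
  | succ t ih =>
      intro k hk
      have ihk := ih k hk
      set y := k + t * eb with hy
      set r := y % n with hr
      set w := y / n with hw
      have hyr : y = n * w + r := (Nat.div_add_mod y n).symm
      have hrn : r < n := Nat.mod_lt _ hn
      have hy' : k + (t+1) * eb = y + eb := by rw [hy]; ring
      rcases lt_or_ge (r + eb) n with hc | hc
      · -- no wrap
        obtain ⟨e1, e2⟩ := aub_moddiv hn (y + eb) w (r + eb) hc (by rw [hyr]; ring)
        rw [hy', e1, e2, R1 r hc, ihk]
        have hz : ((t+1 : ℕ) : ℤ) - (w : ℤ) = ((t : ℤ) - w) + 1 := by push_cast; ring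
        rw [hz, zpow_add_one]
        ac_rfl
      · -- wrap
        have hsplit : r + eb = n + (r + eb - n) := by omega
        have hlt : r + eb - n < n := by omega
        have h9 : n * (w+1) + (r + eb - n) = n * w + (n + (r + eb - n)) := by ring
        obtain ⟨e1, e2⟩ := aub_moddiv hn (y + eb) (w+1) (r + eb - n) hlt
          (by rw [hyr, h9, ← hsplit]; ring)
        rw [hy', e1, e2, R2 r hrn hc, ihk]
        have hz : ((t+1 : ℕ) : ℤ) - ((w+1 : ℕ) : ℤ) = (t : ℤ) - w := by push_cast; ring
        have hz2 : (((w+1 : ℕ)) : ℤ) = (w : ℤ) + 1 := by push_cast; ring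
        rw [hz, hz2, zpow_add_one, mul_inv]
        ac_rfl
end W

section Theta
variable {A : Type*}

lemma theta_exists
    (L : ℕ) (σ : ℕ → Equiv.Perm A) (hL : 2 ≤ L) (hσ0 : σ 0 = 1)
    (S : Subgroup (Equiv.Perm A)) (hgen : ∀ i, i < L → σ i ∈ S)
    (hcomm : ∀ g ∈ S, ∀ h ∈ S, g * h = h * g)
    (htrans : ∀ a b : A, ∃ g ∈ S, g a = b)
    (v : ℕ → A) (hv : SubstFixedPoint L (fun a i => σ i a) v)
    (N : ℕ) (hN1 : 1 ≤ N) (e : ℕ) (he1 : 1 ≤ e) (hcop : Nat.Coprime e L)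
    (Aw : ℕ) (hwin : ∀ x, Aw ≤ x → x ≤ Aw + e * (L^N - 1) → v (x + e) = v x) :
    ∃ Θ : Equiv.Perm A, Θ ∈ S ∧ (∀ i, i < L → σ i = Θ ^ i) ∧ Θ ^ (L - 1) = 1 := by
  have hL0 : 0 < L := by omega
  set M := L ^ N with hMdef
  have hM2 : 2 ≤ M := by
    have := Nat.one_lt_pow (show N ≠ 0 by omega) (show 1 < L by omega)
    omega
  have hLM : L ≤ M := by
    calc L = L ^ 1 := (pow_one L).symm
    _ ≤ L ^ N := Nat.pow_le_pow_right (by omega) hN1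
  have colmem : ∀ n k, acol L σ n k ∈ S := acol_mem L σ hL0 S hgen
  have hcs : ∀ i, i < L → acol L σ N i = σ i := by
    obtain ⟨N', hN'⟩ : ∃ N', N = N' + 1 := ⟨N - 1, by omega⟩
    intro i hi
    rw [hN']
    exact acol_small L σ hσ0 N' hi
  rcases eq_or_lt_of_le he1 with he1' | he2
  · -- e = 1
    have he : e = 1 := he1'.symm
    have hconst : ∀ k, k ≤ M → v (Aw + k) = v Aw := by
      intro k
      induction k with
      | zero => intro _; rfl
      | succ k ih =>
          intro hk
          have h1 : v (Aw + k + e) = v (Aw + k) := by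
            apply hwin (Aw + k) (by omega)
            have : 1 * (M - 1) ≤ e * (M-1) := Nat.mul_le_mul_right _ he1
            omega
          rw [he] at h1
          have : Aw + (k+1) = Aw + k + 1 := by omega
          rw [this, h1]
          exact ih (by omega)
    set Q := Aw / M with hQdef
    set s₀ := Aw % M with hs₀def
    have hAQ : M * Q + s₀ = Aw := Nat.div_add_mod Aw M
    have hs₀M : s₀ < M := Nat.mod_lt _ (by omega)
    have h2 : ∀ k, k ≤ s₀ → acol L σ N k (v (Q+1)) = v Aw := by
      intro k hk
      have hkM : k < M := by omega
      have hx := vpos L σ hL0 v hv N (Q+1) k hkM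
      have harith : (Q+1) * M + k = Aw + (M - s₀ + k) := by
        have hexp : (Q+1) * M = Q * M + M := by ring
        have hcm : Q * M = M * Q := mul_comm _ _
        omega
      rw [harith] at hx
      rw [← hx]
      exact hconst (M - s₀ + k) (by omega)
    have hQ1 : v (Q+1) = v Aw := by
      have := h2 0 (Nat.zero_le _)
      rwa [acol_zero L σ hσ0 N, Equiv.Perm.one_apply] at this
    have h2' : ∀ k, k ≤ s₀ → acol L σ N k = 1 := by
      intro k hk
      apply free_of S hcomm htrans (colmem N k) (one_mem S) (v (Q+1))
      rw [h2 k hk, Equiv.Perm.one_apply, hQ1]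
    have h1 : ∀ k, s₀ ≤ k → k < M → acol L σ N k (v Q) = v Aw := by
      intro k hks hkM
      have hx := vpos L σ hL0 v hv N Q k hkM
      have harith : Q * M + k = Aw + (k - s₀) := by
        have hcm : Q * M = M * Q := mul_comm _ _
        omega
      rw [harith] at hx
      rw [← hx]
      exact hconst (k - s₀) (by omega)
    have hall : ∀ k, k < M → acol L σ N k = 1 := by
      intro k hkM
      rcases le_or_gt k s₀ with hle | hgt
      · exact h2' k hle
      · have e1 := h1 k (by omega) hkM
        have e2 := h1 s₀ le_rfl hs₀M
        have heq : acol L σ N k = acol L σ N s₀ :=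
          free_of S hcomm htrans (colmem N k) (colmem N s₀) (v Q) (e1.trans e2.symm)
        rw [heq]
        exact h2' s₀ le_rfl
    refine ⟨1, one_mem S, ?_, one_pow _⟩
    intro i hi
    rw [← hcs i hi, hall i (by omega), one_pow]
  · -- e ≥ 2
    have he2 : 2 ≤ e := he2
    set ebar := e % M with hebardef
    set Eb := e / M with hEbdef
    have heE : M * Eb + ebar = e := Nat.div_add_mod e M
    have hebarM : ebar < M := Nat.mod_lt _ (by omega)
    have hebar0 : 0 < ebar := by
      rcases Nat.eq_zero_or_pos ebar with h0 | h
      · exfalso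
        have hdvd : M ∣ e := Nat.dvd_of_mod_eq_zero h0
        have hLe : L ∣ e := dvd_trans (dvd_pow_self L (show N ≠ 0 by omega)) hdvd
        have : L ∣ Nat.gcd e L := Nat.dvd_gcd hLe dvd_rfl
        rw [hcop] at this
        exact absurd (Nat.le_of_dvd one_pos this) (by omega)
      · exact h
    have hcop2 : Nat.gcd ebar M = 1 := by
      have h1 : Nat.Coprime e M := hcop.pow_right N
      have h2 := Nat.gcd_rec M e
      rw [hebardef]
      rw [← h2]
      rw [Nat.gcd_comm]
      exact h1
    -- full block
    set qb := (Aw + (M-1)) / M with hqbdef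
    have hqbid : M * qb + (Aw + (M-1)) % M = Aw + (M-1) := Nat.div_add_mod _ M
    have hqbmod : (Aw + (M-1)) % M < M := Nat.mod_lt _ (by omega)
    have hcmqb : qb * M = M * qb := mul_comm _ _
    have hqb1 : Aw ≤ qb * M := by omega
    have hqb2 : qb * M + (M - 1) ≤ Aw + e * (M - 1) := by
      have h5 : 2 * (M-1) ≤ e * (M-1) := Nat.mul_le_mul_right _ he2
      omega
    set b := v qb with hbdef
    set b1 := v (qb + Eb) with hb1def
    set b2 := v (qb + Eb + 1) with hb2def
    set γ := acol L σ N ebar with hγdef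
    set δ := acol L σ N (M - ebar) with hδdef
    have E1 : ∀ k, k + ebar < M → acol L σ N k b = acol L σ N (k + ebar) b1 := by
      intro k hk
      have hkM : k < M := by omega
      have hx1 := vpos L σ hL0 v hv N qb k hkM
      have harith : qb * M + k + e = (qb + Eb) * M + (k + ebar) := by
        have hexp : (qb + Eb) * M = qb * M + M * Eb := by ring
        omega
      have hx2 : v (qb * M + k + e) = acol L σ N (k + ebar) b1 := by
        rw [harith]
        exact vpos L σ hL0 v hv N (qb+Eb) (k+ebar) hk
      have hw := hwin (qb * M + k) (by omega) (by omega)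
      rw [hx1, hx2] at hw
      exact hw.symm
    have E2 : ∀ k, k < M → M ≤ k + ebar → acol L σ N k b = acol L σ N (k + ebar - M) b2 := by
      intro k hkM hk
      have hx1 := vpos L σ hL0 v hv N qb k hkM
      have harith : qb * M + k + e = (qb + Eb + 1) * M + (k + ebar - M) := by
        have hexp : (qb + Eb + 1) * M = qb * M + M * Eb + M := by ring
        omega
      have hx2 : v (qb * M + k + e) = acol L σ N (k + ebar - M) b2 := by
        rw [harith]
        exact vpos L σ hL0 v hv N (qb+Eb+1) (k+ebar-M) (by omega)
      have hw := hwin (qb * M + k) (by omega) (by omega)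
      rw [hx1, hx2] at hw
      exact hw.symm
    have hb1 : γ⁻¹ b = b1 := by
      have h0 := E1 0 (by omega)
      rw [acol_zero L σ hσ0 N, Equiv.Perm.one_apply] at h0
      rw [h0]
      simp [hγdef]
    have R1 : ∀ k, k + ebar < M → acol L σ N (k+ebar) = acol L σ N k * γ := by
      intro k hk
      have hfree : acol L σ N k = acol L σ N (k+ebar) * γ⁻¹ := by
        apply free_of S hcomm htrans (colmem N k)
          (mul_mem (colmem N (k+ebar)) (inv_mem (colmem N ebar))) b
        rw [E1 k hk, Equiv.Perm.mul_apply, hb1]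
      rw [hfree, mul_assoc, inv_mul_cancel, mul_one]
    have hb2 : δ b = b2 := by
      have h0 := E2 (M - ebar) (by omega) (by omega)
      have hz : M - ebar + ebar - M = 0 := by omega
      rw [hz, acol_zero L σ hσ0 N, Equiv.Perm.one_apply] at h0
      exact h0
    have R2 : ∀ k, k < M → M ≤ k + ebar → acol L σ N (k + ebar - M) = acol L σ N k * δ⁻¹ := by
      intro k hkM hk
      have hfree : acol L σ N k = acol L σ N (k + ebar - M) * δ := by
        apply free_of S hcomm htrans (colmem N k)
          (mul_mem (colmem N (k+ebar-M)) (colmem N (M-ebar))) b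
        rw [E2 k hkM hk, Equiv.Perm.mul_apply, hb2]
      rw [hfree, mul_assoc, mul_inv_cancel, mul_one]
    -- commutative group structure on the subgroup
    letI : CommGroup ↥S :=
      { (inferInstance : Group ↥S) with
        mul_comm := fun a b => Subtype.ext (hcomm a.1 a.2 b.1 b.2) }
    set CS : ℕ → ↥S := fun k => ⟨acol L σ N k, colmem N k⟩ with hCSdef
    have CR1 : ∀ k, k + ebar < M → CS (k + ebar) = CS k * CS ebar := by
      intro k hk
      exact Subtype.ext (R1 k hk)
    have CR2 : ∀ k, k < M → M ≤ k + ebar → CS (k + ebar - M) = CS k * (CS (M - ebar))⁻¹ := by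
      intro k hkM hk
      exact Subtype.ext (R2 k hkM hk)
    obtain ⟨ts, c, hts1, htseq⟩ := aub_bez ebar M hebar0 hM2 hcop2
    have hwalk := aub_walk M ebar hebar0 hebarM CS CR1 CR2
    set ΘS : ↥S := CS ebar ^ ((ts : ℤ) - (c : ℤ)) * (CS (M - ebar) ^ ((c : ℤ)))⁻¹ with hΘSdef
    set Θ : Equiv.Perm A := (ΘS : Equiv.Perm A) with hΘdef
    have hΘmem : Θ ∈ S := ΘS.2
    have hstep : ∀ k, k + 1 < M → CS (k+1) = CS k * ΘS := by
      intro k hk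
      have hcm : M * c = c * M := mul_comm _ _
      have harith : k + ts * ebar = M * c + (k+1) := by omega
      obtain ⟨e1, e2⟩ := aub_moddiv (by omega : 0 < M) (k + ts * ebar) c (k+1) hk harith
      have hw := hwalk ts k (by omega)
      rw [e1, e2] at hw
      rw [hw, hΘSdef, mul_assoc]
    have hstep' : ∀ i, i + 1 < L → σ (i+1) = σ i * Θ := by
      intro i hi
      have h := hstep i (by omega)
      have h2 : acol L σ N (i+1) = acol L σ N i * Θ := congrArg Subtype.val h
      rwa [hcs (i+1) hi, hcs i (by omega)] at h2
    have hσΘ : ∀ i, i < L → σ i = Θ ^ i := by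
      intro i
      induction i with
      | zero => intro _; rw [hσ0, pow_zero]
      | succ i ih =>
          intro hi
          rw [hstep' i hi, ih (by omega), pow_succ]
    have hvL1 : ∀ q i, i < L → v (q * L + i) = (Θ ^ i) (v q) := by
      intro q i hi
      have h : v (L * q + i) = σ i (v q) := hv q i hi
      rw [mul_comm L q] at h
      rw [hσΘ i hi] at h
      exact h
    have hF : Θ ^ (L - 1) = 1 := by
      have hebr0 : 0 < e % L := by
        rcases Nat.eq_zero_or_pos (e % L) with h0 | h
        · exfalso
          have hLe : L ∣ e := Nat.dvd_of_mod_eq_zero h0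
          have hdg : L ∣ Nat.gcd e L := Nat.dvd_gcd hLe dvd_rfl
          rw [hcop] at hdg
          exact absurd (Nat.le_of_dvd one_pos hdg) (by omega)
        · exact h
      set ebr := e % L with hebrdef
      set Er := e / L with hErdef
      have heEr : L * Er + ebr = e := Nat.div_add_mod e L
      have hebrL : ebr < L := Nat.mod_lt _ (by omega)
      by_cases hF1 : Aw + 2 * L ≤ Aw + e * (M - 1)
      · -- main case: two boundaries
        have brel : ∀ Q', Aw + e < (Q'+1) * L → (Q'+1) * L ≤ Aw + e * (M-1) + e →
            v (Q'+1) = (Θ ^ L) (v Q') := by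
          intro Q' hq1 hq2
          have hErQ : Er ≤ Q' := by
            have h1 : L * Er ≤ e := by omega
            have h2 : L * Er < L * (Q'+1) := by
              have hcm : (Q'+1) * L = L * (Q'+1) := mul_comm _ _
              omega
            have h3 : Er < Q' + 1 := lt_of_mul_lt_mul_left h2 (Nat.zero_le _)
            omega
          set q := Q' - Er with hqdef
          set r := L - 1 - ebr with hrdef
          have hrL : r + 1 < L := by omega
          have hxe : q * L + r + e = Q' * L + (L-1) := by
            have hQq : Q' * L = q * L + Er * L := by
              have hq' : Q' = q + Er := by omega
              rw [hq']; ring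
            have hcm : Er * L = L * Er := mul_comm _ _
            omega
          have hxe1 : q * L + r + 1 + e = (Q'+1) * L := by
            have hQ1L : (Q'+1) * L = Q' * L + L := by ring
            omega
          have hxA : Aw ≤ q * L + r := by omega
          have hxB : q * L + r + 1 ≤ Aw + e * (M-1) := by omega
          have w1 := hwin (q*L + r) hxA (by omega)
          have w2 := hwin (q*L + r + 1) (by omega) hxB
          have l1 : v (q*L + r) = (Θ^r) (v q) := hvL1 q r (by omega)
          have l2 : v (q*L + r + 1) = (Θ^(r+1)) (v q) := by
            have h := hvL1 q (r+1) (by omega)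
            rw [← add_assoc] at h
            exact h
          have l3 : v (q*L + r + e) = (Θ^(L-1)) (v Q') := by
            rw [hxe]
            exact hvL1 Q' (L-1) (by omega)
          have l4 : v (q*L + r + 1 + e) = v (Q'+1) := by
            rw [hxe1]
            have h := hvL1 (Q'+1) 0 (by omega)
            rw [add_zero] at h
            rw [h, pow_zero, Equiv.Perm.one_apply]
          rw [l3, l1] at w1
          rw [l4, l2] at w2
          have hsplit : L - 1 = r + ebr := by omega
          have w1' : (Θ^ebr) (v Q') = v q := by
            apply (Θ^r).injective
            rw [← Equiv.Perm.mul_apply, ← pow_add]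
            rw [hsplit] at w1
            exact w1
          rw [w2, ← w1', ← Equiv.Perm.mul_apply, ← pow_add]
          have hrsum : r + 1 + ebr = L := by omega
          rw [hrsum]
        set P₀ := (Aw + e) / L with hP₀def
        have hP₀id : L * P₀ + (Aw + e) % L = Aw + e := Nat.div_add_mod _ L
        have hP₀mod : (Aw + e) % L < L := Nat.mod_lt _ (by omega)
        obtain ⟨Q', hQ'or, hQ'mod⟩ : ∃ Q', (Q' = P₀ ∨ Q' = P₀ + 1) ∧ Q' % L ≠ L - 1 := by
          by_cases hP : P₀ % L = L - 1
          · refine ⟨P₀ + 1, Or.inr rfl, ?_⟩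
            have h1 : (P₀ + 1) % L = (P₀ % L + 1 % L) % L := Nat.add_mod _ _ _
            rw [Nat.mod_eq_of_lt (show (1:ℕ) < L by omega)] at h1
            rw [hP] at h1
            have h2 : L - 1 + 1 = L := by omega
            rw [h2, Nat.mod_self] at h1
            omega
          · exact ⟨P₀, Or.inl rfl, hP⟩
        have hexp1 : (P₀+1) * L = L * P₀ + L := by ring
        have hexp2 : (P₀+1+1) * L = L * P₀ + 2*L := by ring
        have hbrel : v (Q'+1) = (Θ ^ L) (v Q') := by
          rcases hQ'or with rfl | rfl
          · exact brel _ (by omega) (by omega)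
          · exact brel _ (by omega) (by omega)
        set u := Q' % L with hudef
        set R := Q' / L with hRdef
        have huid : L * R + u = Q' := Nat.div_add_mod _ L
        have huL : u < L := Nat.mod_lt _ (by omega)
        have hu2 : u + 1 < L := by omega
        have hcmR : R * L = L * R := mul_comm _ _
        have lA : v Q' = (Θ^u) (v R) := by
          have h := hvL1 R u huL
          have harr : R * L + u = Q' := by omega
          rw [harr] at h
          exact h
        have lB : v (Q'+1) = (Θ^(u+1)) (v R) := by
          have h := hvL1 R (u+1) hu2
          have harr : R * L + (u+1) = Q' + 1 := by omega
          rw [harr] at h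
          exact h
        rw [lA, lB] at hbrel
        have hb' : (Θ^(u+1)) (v R) = (Θ^(L+u)) (v R) := by
          rw [hbrel, ← Equiv.Perm.mul_apply, ← pow_add]
        have heq : Θ^(u+1) = Θ^(L+u) :=
          free_of S hcomm htrans (pow_mem hΘmem _) (pow_mem hΘmem _) (v R) hb'
        have h9 : Θ^(u+1) * Θ^(L-1) = Θ^(u+1) * 1 := by
          rw [mul_one, ← pow_add]
          have : u + 1 + (L-1) = L + u := by omega
          rw [this]
          exact heq.symm
        exact mul_left_cancel h9
      · -- small window cases
        have hsmall : e * (M-1) < 2 * L := by omega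
        by_cases he2' : e = 2
        · -- F2
          have hnd : ¬ (2 ∣ L) := by
            intro hdvd
            have hdg : 2 ∣ Nat.gcd e L := Nat.dvd_gcd (by rw [he2']) hdvd
            rw [hcop] at hdg
            have := Nat.le_of_dvd one_pos hdg
            omega
          have hLodd : L % 2 = 1 := by omega
          have hL3 : 3 ≤ L := by omega
          set q0 := (Aw + (L-1)) / L with hq0def
          have hq0id : L * q0 + (Aw + (L-1)) % L = Aw + (L-1) := Nat.div_add_mod _ L
          have hq0mod : (Aw + (L-1)) % L < L := Nat.mod_lt _ (by omega)
          have hcm0 : q0 * L = L * q0 := mul_comm _ _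
          have hx0A : Aw ≤ q0 * L := by omega
          have hMe : 2 * (L-1) ≤ e * (M-1) := by
            have h1 : e * (L-1) ≤ e * (M-1) := Nat.mul_le_mul_left e (by omega)
            have h2 : e * (L-1) = 2 * (L-1) := by rw [he2']
            omega
          have hx0B : q0 * L ≤ Aw + e * (M-1) := by omega
          have w := hwin (q0 * L) hx0A hx0B
          have l1 : v (q0 * L) = v q0 := by
            have h := hvL1 q0 0 (by omega)
            rw [add_zero] at h
            rw [h, pow_zero, Equiv.Perm.one_apply]
          have l2 : v (q0 * L + e) = (Θ^2) (v q0) := by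
            rw [he2']
            exact hvL1 q0 2 (by omega)
          rw [l1, l2] at w
          have heq : Θ^2 = 1 :=
            free_of S hcomm htrans (pow_mem hΘmem _) (one_mem S) (v q0)
              (by rw [w, Equiv.Perm.one_apply])
          have hLexp : L - 1 = 2 * ((L-1)/2) := by omega
          rw [hLexp, pow_mul, heq, one_pow]
        · -- F3 : L = 2, e = 3
          have he3 : 3 ≤ e := by omega
          have h2' : e * (L-1) ≤ e * (M-1) := Nat.mul_le_mul_left e (by omega)
          have h3 : 3 * (L-1) ≤ e * (L-1) := Nat.mul_le_mul_right _ he3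
          have hLeq2 : L = 2 := by omega
          have h4 : 3 * (M-1) ≤ e * (M-1) := Nat.mul_le_mul_right _ he3
          have hMeq2 : M = 2 := by omega
          have hM1 : M - 1 = 1 := by omega
          have heM : e * (M-1) = e := by rw [hM1, mul_one]
          have heeq3 : e = 3 := by omega
          have vv0 : ∀ a, v (2*a) = v a := by
            intro a
            have h := hvL1 a 0 (by omega)
            rw [add_zero, pow_zero, Equiv.Perm.one_apply] at h
            have h2 : a * L = 2 * a := by rw [hLeq2]; ring
            rw [h2] at h
            exact h
          have vv1 : ∀ a, v (2*a+1) = Θ (v a) := by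
            intro a
            have h := hvL1 a 1 (by omega)
            rw [pow_one] at h
            have h2 : a * L + 1 = 2*a + 1 := by rw [hLeq2]; ring_nf
            rw [h2] at h
            exact h
          have hBB : e * (M - 1) = 3 := by omega
          obtain ⟨x, hx1, hx2, hx4⟩ :
              ∃ x, Aw ≤ x ∧ x + 1 ≤ Aw + 3 ∧ (x % 4 = 1 ∨ x % 4 = 2) := by
            rcases (by omega : Aw % 4 = 0 ∨ Aw % 4 = 1 ∨ Aw % 4 = 2 ∨ Aw % 4 = 3) with h|h|h|h
            · exact ⟨Aw + 1, by omega, by omega, by omega⟩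
            · exact ⟨Aw, le_rfl, by omega, by omega⟩
            · exact ⟨Aw, le_rfl, by omega, by omega⟩
            · exact ⟨Aw + 2, by omega, by omega, by omega⟩
          have w1 := hwin x hx1 (by omega)
          have w2 := hwin (x+1) (by omega) (by omega)
          rw [heeq3] at w1 w2
          set rr := x / 4 with hrrdef
          have hrid : 4 * rr + x % 4 = x := Nat.div_add_mod x 4
          have hΘ1 : Θ = 1 := by
            rcases hx4 with hc | hc
            · have e1 : x = 2*(2*rr) + 1 := by omega
              have e2 : x + 1 = 2*(2*rr+1) := by omega
              have e3 : x + 3 = 2*(2*(rr+1)) := by omega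
              have e4 : x + 1 + 3 = 2*(2*(rr+1)) + 1 := by omega
              have m1 : v x = Θ (v rr) := by rw [e1, vv1, vv0]
              have m2 : v (x+1) = Θ (v rr) := by rw [e2, vv0, vv1]
              have m3 : v (x+3) = v (rr+1) := by rw [e3, vv0, vv0]
              have m4 : v (x+1+3) = Θ (v (rr+1)) := by rw [e4, vv1, vv0]
              rw [m1, m3] at w1
              rw [m2, m4] at w2
              have h5 : v (rr+1) = v rr := Θ.injective w2
              have h6 : Θ (v rr) = v rr := by rw [← w1, h5]
              exact free_of S hcomm htrans hΘmem (one_mem S) (v rr)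
                (by rw [h6, Equiv.Perm.one_apply])
            · have e1 : x = 2*(2*rr+1) := by omega
              have e2 : x + 1 = 2*(2*rr+1) + 1 := by omega
              have e3 : x + 3 = 2*(2*(rr+1)) + 1 := by omega
              have e4 : x + 1 + 3 = 2*(2*(rr+1)+1) := by omega
              have m1 : v x = Θ (v rr) := by rw [e1, vv0, vv1]
              have m2 : v (x+1) = Θ (Θ (v rr)) := by rw [e2, vv1, vv1]
              have m3 : v (x+3) = Θ (v (rr+1)) := by rw [e3, vv1, vv0]
              have m4 : v (x+1+3) = Θ (v (rr+1)) := by rw [e4, vv0, vv1]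
              rw [m1, m3] at w1
              rw [m2, m4] at w2
              have h5 : v (rr+1) = v rr := Θ.injective w1
              have h6 : Θ (v rr) = v rr := by
                have hw2' := w2
                rw [h5] at hw2'
                exact (Θ.injective hw2').symm
              exact free_of S hcomm htrans hΘmem (one_mem S) (v rr)
                (by rw [h6, Equiv.Perm.one_apply])
          rw [hΘ1, one_pow]
    exact ⟨Θ, hΘmem, hσΘ, hF⟩

end Theta

section PC
variable {A : Type*}

lemma periodic_contra [Fintype A]
    (L : ℕ) (σ : ℕ → Equiv.Perm A) (hL : 2 ≤ L) (hσ0 : σ 0 = 1)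
    (v : ℕ → A) (hv : SubstFixedPoint L (fun a i => σ i a) v)
    (haper : SubstAperiodic L (fun a i => σ i a))
    (Θ : Equiv.Perm A) (hσΘ : ∀ i, i < L → σ i = Θ ^ i) (hΘL : Θ ^ (L-1) = 1) :
    False := by
  have hL0 : 0 < L := by omega
  have hstep : ∀ z, v (z + 1) = Θ (v z) := by
    intro z
    induction z using Nat.strong_induction_on with
    | _ z ih =>
      set q := z / L with hq
      set i := z % L with hi
      have hzid : L * q + i = z := Nat.div_add_mod z L
      have hiL : i < L := Nat.mod_lt _ hL0
      have hz : v z = (Θ^i) (v q) := by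
        have h : v (L * q + i) = σ i (v q) := hv q i hiL
        rw [hzid, hσΘ i hiL] at h
        exact h
      rcases lt_or_ge (i+1) L with hlt | hge
      · have h : v (L * q + (i+1)) = σ (i+1) (v q) := hv q (i+1) hlt
        have harr : L * q + (i+1) = z + 1 := by omega
        rw [harr, hσΘ (i+1) hlt] at h
        rw [h, hz, pow_succ', Equiv.Perm.mul_apply]
      · have hieq : i = L - 1 := by omega
        have hvzq : v z = v q := by
          rw [hz, hieq, hΘL, Equiv.Perm.one_apply]
        have hz1 : z + 1 = L * (q+1) + 0 := by
          have hLq : L * (q+1) = L*q + L := by ring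
          omega
        have h1 : v (L * (q+1) + 0) = σ 0 (v (q+1)) := hv (q+1) 0 hL0
        rw [hσ0, Equiv.Perm.one_apply] at h1
        have hqz : q < z := by
          have h2q : 2 * q ≤ L * q := Nat.mul_le_mul_right q hL
          omega
        have hih := ih q hqz
        rw [hz1, h1, hih, hvzq]
  have hstept : ∀ t z, v (z + t) = (Θ^t) (v z) := by
    intro t
    induction t with
    | zero => intro z; simp
    | succ t ih =>
        intro z
        have harr : z + (t+1) = (z + t) + 1 := by omega
        rw [harr, hstep (z+t), ih z, ← Equiv.Perm.mul_apply, ← pow_succ']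
  haveI : Finite (Equiv.Perm A) :=
    Finite.of_injective (fun g : Equiv.Perm A => (g : A → A))
      (fun g h hgh => Equiv.coe_fn_injective hgh)
  apply haper v hv
  refine ⟨orderOf Θ, orderOf_pos Θ, fun j => ?_⟩
  rw [hstept (orderOf Θ) j, pow_orderOf_eq_one, Equiv.Perm.one_apply]

end PC



/-- Abelian upper bound. With `N` minimal such that all legal
two-letter words appear in `ρ^N(a)` for every `a`, `d ≤ L^m`,
`ℓ = gcd(d, L^m) = gcd(d, L^{N+m})`: a monochromatic progression of
difference `d` and length `L^{N+m}/ℓ + 1` in the fixed point `v` would be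
infinite; consequently `A(d) ≤ L^{N+m}/ℓ`. -/
theorem abelian_upper_bound {A : Type*} [Fintype A]
    (L : ℕ) (hL : 2 ≤ L) (σ : ℕ → Equiv.Perm A) (hσ0 : σ 0 = 1)
    (hprim : SubstPrimitive L (fun a i => σ i a))
    (haper : SubstAperiodic L (fun a i => σ i a))
    (habel : ∀ i < L, ∀ j < L, σ i * σ j = σ j * σ i)
    (v : ℕ → A) (hv : SubstFixedPoint L (fun a i => σ i a) v)
    (N : ℕ) (hN : ContainsAllLegal2 L (fun a i => σ i a) N)
    (hNmin : ∀ m, ContainsAllLegal2 L (fun a i => σ i a) m → N ≤ m)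
    (d m : ℕ) (hd : 1 ≤ d) (hm : 1 ≤ m) (hdm : d ≤ L ^ m)
    (hgcd : Nat.gcd d (L ^ m) = Nat.gcd d (L ^ (N + m))) :
    (∀ s : ℕ, (∀ j ≤ L ^ (N + m) / Nat.gcd d (L ^ m), v (s + j * d) = v s) →
      ∀ j : ℕ, v (s + j * d) = v s) ∧
    (∀ s M : ℕ, (∀ j < M, v (s + j * d) = v s) →
      M ≤ L ^ (N + m) / Nat.gcd d (L ^ m)) := by
  have hL0 : 0 < L := by omega
  -- the subgroup generated by the columns
  set Sgen : Set (Equiv.Perm A) := {g | ∃ i, i < L ∧ g = σ i} with hSgendef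
  set S : Subgroup (Equiv.Perm A) := Subgroup.closure Sgen with hSdef
  have hgen : ∀ i, i < L → σ i ∈ S := fun i hi => Subgroup.subset_closure ⟨i, hi, rfl⟩
  have hsub : S ≤ Subgroup.centralizer Sgen := by
    rw [hSdef]
    apply (Subgroup.closure_le _).2
    intro x hx
    obtain ⟨i, hi, rfl⟩ := hx
    rw [SetLike.mem_coe, Subgroup.mem_centralizer_iff]
    intro g hg
    obtain ⟨j, hj, rfl⟩ := hg
    exact habel j hj i hi
  have hcomm : ∀ g ∈ S, ∀ h ∈ S, g * h = h * g := by
    intro g hg h hh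
    have hx : ∀ x ∈ Sgen, x ∈ (Subgroup.centralizer {g} : Subgroup (Equiv.Perm A)) := by
      intro x hxgen
      rw [Subgroup.mem_centralizer_iff]
      intro y hy
      rw [Set.mem_singleton_iff] at hy
      subst hy
      have hgc := hsub hg
      rw [Subgroup.mem_centralizer_iff] at hgc
      exact (hgc x hxgen).symm
    have hle : S ≤ Subgroup.centralizer {g} := by
      rw [hSdef]
      exact (Subgroup.closure_le _).2 hx
    have hh' := hle hh
    rw [Subgroup.mem_centralizer_iff] at hh'
    exact hh' g (Set.mem_singleton g)
  have htrans : ∀ a b : A, ∃ g ∈ S, g a = b := by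
    intro a b
    obtain ⟨n₀, hn₀⟩ := hprim
    obtain ⟨k, hk, hab⟩ := hn₀ a b
    rw [substPow_eq_acol] at hab
    exact ⟨acol L σ n₀ k, acol_mem L σ hL0 S hgen n₀ k, hab⟩
  -- N ≥ 1
  have hN1 : 1 ≤ N := by
    by_contra hN0
    have hNz : N = 0 := by omega
    have hleg : Legal2 L (fun a i => σ i a) (v 0) (v 1) := by
      refine ⟨v 0, 1, 0, by rw [pow_one]; omega, ?_, ?_⟩
      · rw [substPow_eq_acol, acol_small L σ hσ0 0 (by omega : (0:ℕ) < L), hσ0,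
          Equiv.Perm.one_apply]
      · rw [substPow_eq_acol, acol_small L σ hσ0 0 (by omega : (1:ℕ) < L)]
        have h := hv 0 1 (by omega)
        rw [mul_zero, zero_add] at h
        exact h.symm
    obtain ⟨k, hk, -, -⟩ := hN (v 0) (v 0) (v 1) hleg
    rw [hNz, pow_zero] at hk
    omega
  -- arithmetic of ℓ and e
  have hl1 : 1 ≤ Nat.gcd d (L^m) := Nat.gcd_pos_of_pos_left _ hd
  set ℓ : ℕ := Nat.gcd d (L^m) with hldef
  obtain ⟨u, hu⟩ : ℓ ∣ L^m := Nat.gcd_dvd_right _ _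
  obtain ⟨w, hw⟩ : ℓ ∣ d := Nat.gcd_dvd_left _ _
  set e : ℕ := d / ℓ with hedef
  have hew : e = w := by rw [hedef, hw, Nat.mul_div_cancel_left w (by omega)]
  have hwe : d = ℓ * e := by rw [hew]; exact hw
  have he1 : 1 ≤ e := by
    rcases Nat.eq_zero_or_pos e with h0 | h
    · exfalso; rw [h0, mul_zero] at hwe; omega
    · exact h
  have hcop : Nat.Coprime e L := by
    by_contra hnc
    have hgpos : 1 ≤ Nat.gcd e L := Nat.gcd_pos_of_pos_right _ (by omega)
    have hg2 : 2 ≤ Nat.gcd e L := by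
      rcases Nat.lt_or_ge (Nat.gcd e L) 2 with h | h
      · exfalso; apply hnc; unfold Nat.Coprime; omega
      · exact h
    have hld : ℓ * Nat.gcd e L ∣ d := by
      rw [hwe]
      exact mul_dvd_mul_left ℓ (Nat.gcd_dvd_left e L)
    have hlm1 : ℓ * Nat.gcd e L ∣ L^(N+m) := by
      have h1 : ℓ * Nat.gcd e L ∣ L^m * L :=
        mul_dvd_mul (Dvd.intro u hu.symm) (Nat.gcd_dvd_right e L)
      have h2 : L^m * L ∣ L^(N+m) := by
        rw [← pow_succ]
        exact pow_dvd_pow L (by omega)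
      exact dvd_trans h1 h2
    have hdl : ℓ * Nat.gcd e L ∣ ℓ := by
      have h0 : ℓ * Nat.gcd e L ∣ Nat.gcd d (L^(N+m)) := Nat.dvd_gcd hld hlm1
      rwa [← hgcd] at h0
    have hle := Nat.le_of_dvd (by omega) hdl
    have : ℓ * 2 ≤ ℓ * Nat.gcd e L := Nat.mul_le_mul_left ℓ hg2
    omega
  -- the main contradiction
  have main : ∀ s : ℕ, (∀ j, j ≤ L ^ (N + m) / ℓ → v (s + j * d) = v s) →
      False := by
    intro s H
    have hLm0 : 0 < L^m := pow_pos (by omega) m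
    set Pm : ℕ := L^m / ℓ with hPmdef
    have hPmu : Pm = u := by rw [hPmdef, hu, Nat.mul_div_cancel_left u (by omega)]
    have hP : L^(N+m)/ℓ = u * L^N := by
      have h1 : L^(N+m) = ℓ * (u * L^N) := by rw [pow_add, hu]; ring
      rw [h1, Nat.mul_div_cancel_left _ (by omega : 0 < ℓ)]
    set a : ℕ → ℕ := fun j => (s + j*d)/L^m with hadef
    have hPmd : Pm * d = e * L^m := by rw [hPmu, hwe, hu]; ring
    have hshift : ∀ j, s + (j + Pm)*d = (s + j*d) + e * L^m := by
      intro j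
      have h1 : (j + Pm)*d = j*d + Pm*d := by ring
      omega
    have ha_shift : ∀ j, a (j+Pm) = a j + e := by
      intro j
      show (s + (j+Pm)*d)/L^m = (s + j*d)/L^m + e
      rw [hshift j]
      exact Nat.add_mul_div_right _ _ hLm0
    have hstep' : ∀ t, a t ≤ a (t+1) ∧ a (t+1) ≤ a t + 1 := by
      intro t
      have h1 : s + (t+1)*d = (s + t*d) + d := by ring
      constructor
      · show (s + t*d)/L^m ≤ (s + (t+1)*d)/L^m
        apply Nat.div_le_div_right
        omega
      · show (s + (t+1)*d)/L^m ≤ (s + t*d)/L^m + 1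
        rw [h1]
        calc (s + t*d + d)/L^m ≤ (s + t*d + L^m)/L^m := Nat.div_le_div_right (by omega)
          _ = (s + t*d)/L^m + 1 := by rw [Nat.add_div_right _ hLm0]
    have ha0 : a 0 = s / L^m := by simp [hadef]
    have haPm_mul : ∀ wq, a (Pm * wq) = a 0 + e * wq := by
      intro wq
      induction wq with
      | zero => simp
      | succ wq ih =>
          have h1 : Pm * (wq+1) = Pm*wq + Pm := by ring
          rw [h1, ha_shift (Pm*wq), ih]
          ring
    set Aw := s / L^m with hAwdef
    have hwin : ∀ x, Aw ≤ x → x ≤ Aw + e * (L^N - 1) → v (x + e) = v x := by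
      intro x hx1 hx2
      have hMN0 : 0 < L^N := pow_pos (by omega) N
      set T := Pm * (L^N - 1) with hTdef
      have hfT : a T = Aw + e * (L^N - 1) := by rw [hTdef, haPm_mul, ha0]
      obtain ⟨j, hjT, hja⟩ := aub_ivt a T (fun t _ => hstep' t) x
        (by rw [ha0]; exact hx1) (by rw [hfT]; exact hx2)
      have hTP : T + Pm = L^(N+m)/ℓ := by
        have h2 : Pm * L^N = Pm * (L^N-1) + Pm := by
          have h3 : L^N = (L^N - 1) + 1 := by omega
          calc Pm * L^N = Pm * ((L^N - 1) + 1) := by rw [← h3]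
            _ = Pm * (L^N-1) + Pm := by ring
        rw [hP, ← hPmu, hTdef]
        omega
      have hH1 := H j (by omega)
      have hH2 := H (j + Pm) (by omega)
      have hd1 : v (s + j*d) = acol L σ m ((s + j*d) % L^m) (v (a j)) :=
        vdecomp L σ hL0 v hv m (s + j*d)
      have hd2 : v (s + (j+Pm)*d) = acol L σ m ((s + j*d) % L^m) (v (a j + e)) := by
        rw [hshift j]
        have hmod : ((s + j*d) + e * L^m) % L^m = (s + j*d) % L^m :=
          Nat.add_mul_mod_self_right _ _ _
        have hdiv : ((s + j*d) + e * L^m) / L^m = a j + e :=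
          Nat.add_mul_div_right _ _ hLm0
        have := vdecomp L σ hL0 v hv m ((s + j*d) + e * L^m)
        rwa [hmod, hdiv] at this
      rw [hd1] at hH1
      rw [hd2] at hH2
      have hpt := (acol L σ m ((s + j*d) % L^m)).injective (hH2.trans hH1.symm)
      rw [hja] at hpt
      exact hpt
    obtain ⟨Θ, hΘmem, hσΘ, hΘL⟩ :=
      theta_exists L σ hL hσ0 S hgen hcomm htrans v hv N hN1 e he1 hcop Aw hwin
    exact periodic_contra L σ hL hσ0 v hv haper Θ hσΘ hΘL
  have hPP : L ^ (N + m) / Nat.gcd d (L ^ m) = L ^ (N + m) / ℓ := by rw [hldef]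
  constructor
  · intro s hs j
    exact absurd (fun j hj => hs j (by omega)) (fun h => main s h)
  · intro s Mlen hMlen
    by_contra hc
    push_neg at hc
    exact main s (fun j hj => hMlen j (by omega))
end

section
/- Let t be the generalized Thue–Morse sequence over ℤ/Lℤ, defined by t_i = (sum of base-L digits of i) mod L. Then for every n ≥ 1, t contains a monochromatic arithmetic progression of difference L^n − 1 and length L^n; i.e., there exist positions s, s+d, …, s+(L^n−1)d with d = L^n−1 all carrying the same letter. -/
/-- The generalised Thue–Morse sequence over `ℤ/Lℤ`:
`t i` is the base-`L` digit sum of `i`, reduced mod `L`. -/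
def genTM (L : ℕ) (i : ℕ) : ZMod L := ((Nat.digits L i).sum : ZMod L)

/-- Digit-sum recursion: `S N = N % L + S (N / L)`. -/
lemma sumDigits_rec (L : ℕ) (hL : 2 ≤ L) (N : ℕ) :
    (Nat.digits L N).sum = N % L + (Nat.digits L (N / L)).sum := by
  rcases Nat.eq_zero_or_pos N with rfl | hN
  · simp
  · rw [Nat.digits_def' (by omega : 1 < L) hN]
    simp

/-- Splitting a number below `L^n` from a high part:
`S (a + L^n * c) = S a + S c` for `a < L^n`. -/
lemma sumDigits_add_pow_mul (L : ℕ) (hL : 2 ≤ L) (n a c : ℕ) (ha : a < L ^ n) :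
    (Nat.digits L (a + L ^ n * c)).sum = (Nat.digits L a).sum + (Nat.digits L c).sum := by
  rcases Nat.eq_zero_or_pos c with rfl | hc
  · simp
  have hlen : (Nat.digits L a).length ≤ n := by
    rcases Nat.eq_zero_or_pos a with rfl | ha0
    · simp
    · rw [Nat.digits_len L a (by omega) (by omega)]
      have := (Nat.log_lt_iff_lt_pow (by omega : 1 < L) (by omega : a ≠ 0)).mpr ha
      omega
  have := Nat.digits_append_zeroes_append_digits (b := L) (k := n - (Nat.digits L a).length)
    (m := c) (n := a) (by omega) hc
  rw [show (Nat.digits L a).length + (n - (Nat.digits L a).length) = n by omega] at this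
  rw [← this]
  simp [List.sum_append, List.sum_replicate]

/-- Complement identity: for `m < L^n`, `S (L^n - 1 - m) + S m = n * (L - 1)`. -/
lemma sumDigits_compl (L : ℕ) (hL : 2 ≤ L) :
    ∀ n, ∀ m < L ^ n,
      (Nat.digits L (L ^ n - 1 - m)).sum + (Nat.digits L m).sum = n * (L - 1) := by
  intro n
  induction n with
  | zero =>
    intro m hm
    have hm0 : m = 0 := by simpa using hm
    subst hm0; simp
  | succ n ih =>
    intro m hm
    have hdm := Nat.div_add_mod m L
    set q := m / L with hq
    set r := m % L with hr
    have hrL : r < L := Nat.mod_lt _ (by omega)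
    have hmqr : m = L * q + r := hdm.symm
    have hPpos : 0 < L ^ n := Nat.pow_pos (by omega)
    have h1 : L ^ (n + 1) = L * L ^ n := by rw [pow_succ]; ring
    have hqP : q < L ^ n := by
      by_contra hcon
      push_neg at hcon
      have : L * L ^ n ≤ L * q := Nat.mul_le_mul_left L hcon
      omega
    have h3 : L * q + L ≤ L * L ^ n := by
      have : L * (q + 1) ≤ L * L ^ n := Nat.mul_le_mul_left L (by omega)
      rw [Nat.mul_add, Nat.mul_one] at this
      exact this
    have hM : L ^ (n + 1) - 1 - m = (L - 1 - r) + L * (L ^ n - 1 - q) := by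
      have h2 : L * (L ^ n - 1 - q) = L * L ^ n - L - L * q := by
        rw [Nat.mul_sub, Nat.mul_sub, Nat.mul_one]
      omega
    have hSm : (Nat.digits L m).sum = r + (Nat.digits L q).sum := by
      rw [sumDigits_rec L hL m, ← hr, ← hq]
    have hSM : (Nat.digits L (L ^ (n + 1) - 1 - m)).sum
        = (L - 1 - r) + (Nat.digits L (L ^ n - 1 - q)).sum := by
      rw [sumDigits_rec L hL (L ^ (n + 1) - 1 - m), hM]
      have hmod : ((L - 1 - r) + L * (L ^ n - 1 - q)) % L = L - 1 - r := by
        rw [Nat.add_mul_mod_self_left]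
        exact Nat.mod_eq_of_lt (by omega)
      have hdiv : ((L - 1 - r) + L * (L ^ n - 1 - q)) / L = L ^ n - 1 - q := by
        rw [Nat.add_mul_div_left _ _ (by omega : 0 < L), Nat.div_eq_of_lt (by omega)]
        omega
      rw [hmod, hdiv]
    have hIH := ih q hqP
    rw [hSM, hSm]
    have hexp : (n + 1) * (L - 1) = n * (L - 1) + (L - 1) := by ring
    omega

/-- for every `n ≥ 1`, the generalised Thue–Morse sequence over
`ℤ/Lℤ` contains a monochromatic arithmetic progression of difference `L^n − 1`
and length `L^n`. -/
theorem genTM_progression (L : ℕ) (hL : 2 ≤ L) (n : ℕ) (hn : 1 ≤ n) :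
    ∃ s : ℕ, ∀ j < L ^ n, genTM L (s + j * (L ^ n - 1)) = genTM L s := by
  refine ⟨L ^ n - 1, fun j hj => ?_⟩
  have hPpos : 0 < L ^ n := Nat.pow_pos (by omega)
  have key : ∀ m < L ^ n, (Nat.digits L (m + L ^ n * (L ^ n - 1 - m))).sum = n * (L - 1) := by
    intro m hm
    rw [sumDigits_add_pow_mul L hL n m _ hm]
    have := sumDigits_compl L hL n (L ^ n - 1 - m) (by omega)
    have h2 : L ^ n - 1 - (L ^ n - 1 - m) = m := by omega
    rw [h2] at this
    omega
  have hidx : L ^ n - 1 + j * (L ^ n - 1) = (L ^ n - 1 - j) + L ^ n * j := by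
    have h1 : j * (L ^ n - 1) = j * L ^ n - j := by rw [Nat.mul_sub, Nat.mul_one]
    have hj1 : j * L ^ n ≥ j := Nat.le_mul_of_pos_right j hPpos
    have h2 : L ^ n * j = j * L ^ n := Nat.mul_comm _ _
    omega
  have hs1 : (Nat.digits L (L ^ n - 1 + j * (L ^ n - 1))).sum = n * (L - 1) := by
    rw [hidx]
    have := key (L ^ n - 1 - j) (by omega)
    have h2 : L ^ n - 1 - (L ^ n - 1 - j) = j := by omega
    rw [h2] at this
    exact this
  have hs0 : (Nat.digits L (L ^ n - 1)).sum = n * (L - 1) := by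
    have := sumDigits_compl L hL n 0 (by omega)
    simpa using this
  unfold genTM
  rw [hs1, hs0]
end

section
/- Let t be the generalized Thue–Morse sequence over ℤ/Lℤ (t_i = base-L digit sum of i, mod L). If n ≡ 0 (mod L), then t contains a monochromatic arithmetic progression of difference L^n − 1 and length at least L^n + 2L. -/
lemma sd_step {L : ℕ} (hL : 1 < L) (a r : ℕ) (hr : r < L) :
    (Nat.digits L (L * a + r)).sum = r + (Nat.digits L a).sum := by
  rcases Nat.eq_zero_or_pos (L * a + r) with h | h
  · have h1 : L * a = 0 ∧ r = 0 := by omega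
    have h2 : a = 0 := by
      rcases Nat.mul_eq_zero.1 h1.1 with h' | h' <;> omega
    simp [h1.2, h2]
  · rw [Nat.digits_def' hL h]
    have h1 : (L * a + r) % L = r := by
      rw [Nat.mul_add_mod, Nat.mod_eq_of_lt hr]
    have h2 : (L * a + r) / L = a := by
      rw [Nat.mul_add_div (by omega), Nat.div_eq_of_lt hr, Nat.add_zero]
    rw [h1, h2, List.sum_cons]

lemma sd_single {L : ℕ} (hL : 1 < L) (r : ℕ) (hr : r < L) :
    (Nat.digits L r).sum = r := by
  have := sd_step hL 0 r hr
  simpa using this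

lemma sd_split {L : ℕ} (hL : 1 < L) (a : ℕ) : ∀ (k b : ℕ), b < L ^ k →
    (Nat.digits L (L ^ k * a + b)).sum = (Nat.digits L a).sum + (Nat.digits L b).sum := by
  intro k
  induction k with
  | zero => intro b hb; rw [pow_zero] at hb; interval_cases b; simp
  | succ k ih =>
    intro b hb
    have hbl : b % L < L := Nat.mod_lt _ (by omega)
    have hdm := Nat.div_add_mod b L
    have e : L ^ (k+1) * a + b = L * (L ^ k * a + b / L) + b % L := by
      calc L ^ (k+1) * a + b = L * (L ^ k * a) + (L * (b / L) + b % L) := by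
            rw [hdm, pow_succ]; ring
        _ = L * (L ^ k * a + b / L) + b % L := by ring
    have hdiv : b / L < L ^ k := by
      apply Nat.div_lt_of_lt_mul
      rw [mul_comm, ← pow_succ]
      exact hb
    have hb' : (Nat.digits L b).sum = b % L + (Nat.digits L (b / L)).sum := by
      conv_lhs => rw [← hdm]
      exact sd_step hL (b / L) (b % L) hbl
    rw [e, sd_step hL _ _ hbl, ih (b / L) hdiv, hb']
    omega

lemma sd_compl {L : ℕ} (hL : 1 < L) : ∀ (n x : ℕ), x < L ^ n →
    (Nat.digits L x).sum + (Nat.digits L (L ^ n - 1 - x)).sum = n * (L - 1) := by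
  intro n
  induction n with
  | zero => intro x hx; rw [pow_zero] at hx; interval_cases x; simp
  | succ n ih =>
    intro x hx
    have hrL : x % L < L := Nat.mod_lt _ (by omega)
    have hxqr : L * (x / L) + x % L = x := Nat.div_add_mod x L
    have hqn : x / L < L ^ n := by
      apply Nat.div_lt_of_lt_mul
      rw [mul_comm, ← pow_succ]
      exact hx
    have hdist : L * (L ^ n - 1 - x / L) + (L * (x / L) + L) = L * L ^ n := by
      have h' : (L ^ n - 1 - x / L) + (x / L + 1) = L ^ n := by omega
      calc L * (L ^ n - 1 - x / L) + (L * (x / L) + L)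
          = L * ((L ^ n - 1 - x / L) + (x / L + 1)) := by ring
        _ = L * L ^ n := by rw [h']
    have hpow : L ^ (n+1) = L * L ^ n := by rw [pow_succ]; ring
    have key : L ^ (n+1) - 1 - x = L * (L ^ n - 1 - x / L) + (L - 1 - x % L) := by
      omega
    have hih := ih (x / L) hqn
    have hsx : (Nat.digits L x).sum = x % L + (Nat.digits L (x / L)).sum := by
      conv_lhs => rw [← hxqr]
      exact sd_step hL _ _ hrL
    rw [key, sd_step hL _ _ (by omega : L - 1 - x % L < L), hsx]
    have hexp : (n+1) * (L-1) = n * (L-1) + (L-1) := by ring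
    omega

/-- if `n ≡ 0 (mod L)` (and `n ≥ 1`), the generalised
Thue–Morse sequence over `ℤ/Lℤ` contains a monochromatic arithmetic
progression of difference `L^n − 1` and length at least `L^n + 2L`. -/
theorem genTM_progression_long (L : ℕ) (hL : 2 ≤ L) (n : ℕ) (hn : 1 ≤ n)
    (hmod : n % L = 0) :
    ∃ s : ℕ, ∀ j < L ^ n + 2 * L, genTM L (s + j * (L ^ n - 1)) = genTM L s := by
  have hL1 : 1 < L := hL
  have hdvd : L ∣ n := Nat.dvd_of_mod_eq_zero hmod
  have hP : 0 < L ^ n := pow_pos (by omega) n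
  have hLP : L ≤ L ^ n := by
    calc L = L ^ 1 := (pow_one L).symm
    _ ≤ L ^ n := Nat.pow_le_pow_right (by omega) hn
  have e2 : L ^ (2*n) = L ^ n * L ^ n := by rw [two_mul, pow_add]
  have hMpos : 0 < L ^ (2*n) := pow_pos (by omega) _
  have hMz' : ((L:ℤ)) ^ (2*n) = (L:ℤ) ^ n * (L:ℤ) ^ n := by rw [two_mul, pow_add]
  have e : L ^ n * (L ^ n - 1) + L ^ n = L ^ n * L ^ n := by
    have h9 : L ^ n - 1 + 1 = L ^ n := by omega
    calc L ^ n * (L ^ n - 1) + L ^ n = L ^ n * ((L ^ n - 1) + 1) := by ring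
      _ = L ^ n * L ^ n := by rw [h9]
  have hnz0 : ((n * (L - 1) : ℕ) : ZMod L) = 0 := by
    obtain ⟨c, hc⟩ := hdvd
    rw [hc]
    push_cast
    simp [ZMod.natCast_self]
  have hA : ∀ (x : ℕ), x < L ^ n →
      (((Nat.digits L (L ^ n - 1 - x)).sum : ℕ) : ZMod L)
        = - ((Nat.digits L x).sum : ZMod L) := by
    intro x hx
    have h := sd_compl hL1 n x hx
    have h4 : (((Nat.digits L x).sum : ℕ) : ZMod L) + (((Nat.digits L (L ^ n - 1 - x)).sum : ℕ) : ZMod L) = 0 := by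
      rw [← Nat.cast_add, h]; exact hnz0
    linear_combination h4
  have hsplit3 : ∀ A B C : ℕ, C < L ^ n → L ^ n * B + C < L ^ (2*n) →
      (Nat.digits L (L ^ (2*n) * A + (L ^ n * B + C))).sum
        = (Nat.digits L A).sum + ((Nat.digits L B).sum + (Nat.digits L C).sum) := by
    intro A B C hC hBC
    rw [sd_split hL1 A (2*n) _ hBC, sd_split hL1 B n C hC]
  have hsL : (Nat.digits L L).sum = 1 := by
    have h := sd_step hL1 1 0 (by omega)
    have h1 : L * 1 + 0 = L := by ring
    rw [h1] at h
    rw [h, sd_single hL1 1 hL1]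
  have hsL1 : (Nat.digits L (L + 1)).sum = 2 := by
    have h := sd_step hL1 1 1 hL1
    have h1 : L * 1 + 1 = L + 1 := by ring
    rw [h1] at h
    rw [h, sd_single hL1 1 hL1]
  have hsL2 : (((Nat.digits L (L + 2)).sum : ℕ) : ZMod L) = 3 := by
    rcases eq_or_lt_of_le hL with h2 | h3
    · -- L = 2
      have h2' : L = 2 := h2.symm
      subst h2'
      have a1 : Nat.digits 2 4 = [0, 0, 1] := by norm_num
      rw [show (2 + 2 : ℕ) = 4 from rfl, a1]
      decide
    · have h := sd_step hL1 1 2 h3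
      have h1 : L * 1 + 2 = L + 2 := by ring
      rw [h1] at h
      rw [h, sd_single hL1 1 hL1]
      push_cast
      ring
  refine ⟨L ^ (2*n) * L + (L ^ n * (L ^ n - (L - 1)) + (L - 1)), ?_⟩
  have claim : ∀ j < L ^ n + 2 * L,
      genTM L (L ^ (2*n) * L + (L ^ n * (L ^ n - (L - 1)) + (L - 1)) + j * (L ^ n - 1))
        = ((2 : ℕ) : ZMod L) := by
    intro j hj
    rcases lt_or_ge j (L - 1) with h1 | h1
    · -- case 1 : left extension
      set m := L - 1 - j with hm
      have hm1 : 1 ≤ m := by omega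
      have hmL : m ≤ L - 1 := by omega
      have hmz : (m : ℤ) = (L : ℤ) - 1 - (j : ℤ) := by omega
      have key : L ^ (2*n) * L + (L ^ n * (L ^ n - (L - 1)) + (L - 1)) + j * (L ^ n - 1)
          = L ^ (2*n) * L + (L ^ n * (L ^ n - m) + m) := by
        zify [show L - 1 ≤ L ^ n by omega, show (1:ℕ) ≤ L ^ n by omega,
              show m ≤ L ^ n by omega, show (1:ℕ) ≤ L by omega]
        linear_combination ((L:ℤ)^n - 1) * hmz
      have hbound : L ^ n * (L ^ n - m) + m < L ^ (2*n) := by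
        have h4 : L ^ n * (L ^ n - m) ≤ L ^ n * (L ^ n - 1) := Nat.mul_le_mul_left _ (by omega)
        omega
      rw [key]
      simp only [genTM]
      rw [hsplit3 L (L ^ n - m) m (by omega) hbound, hsL,
          sd_single hL1 m (by omega)]
      have hc : L ^ n - 1 - (m - 1) = L ^ n - m := by omega
      have h5 := hA (m - 1) (by omega)
      rw [hc, sd_single hL1 (m-1) (by omega)] at h5
      push_cast [h5, Nat.cast_sub hm1]
      ring
    · rcases le_or_gt j (L - 1 + L ^ n) with h2 | h2
      · -- case 2 : center
        set k := j - (L - 1) with hk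
        have hkN : k ≤ L ^ n := by omega
        have hkz : (k : ℤ) = (j : ℤ) - (L : ℤ) + 1 := by omega
        rcases Nat.eq_zero_or_pos k with hk0 | hk1
        · -- k = 0
          have key : L ^ (2*n) * L + (L ^ n * (L ^ n - (L - 1)) + (L - 1)) + j * (L ^ n - 1)
              = L ^ (2*n) * (L + 1) + (L ^ n * 0 + 0) := by
            have hjz : (j : ℤ) = (L : ℤ) - 1 := by omega
            zify [show L - 1 ≤ L ^ n by omega, show (1:ℕ) ≤ L ^ n by omega,
                  show (1:ℕ) ≤ L by omega]
            linear_combination ((L:ℤ)^n - 1) * hjz - hMz'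
          rw [key]
          simp only [genTM]
          rw [hsplit3 (L+1) 0 0 (by omega) (by simpa using hMpos), hsL1]
          norm_num
        · -- 1 ≤ k ≤ L^n
          have key : L ^ (2*n) * L + (L ^ n * (L ^ n - (L - 1)) + (L - 1)) + j * (L ^ n - 1)
              = L ^ (2*n) * (L + 1) + (L ^ n * (k - 1) + (L ^ n - k)) := by
            zify [show L - 1 ≤ L ^ n by omega, show (1:ℕ) ≤ L ^ n by omega,
                  show (1:ℕ) ≤ L by omega, show 1 ≤ k from hk1, show k ≤ L ^ n from hkN]
            linear_combination (1 - (L:ℤ)^n) * hkz - hMz'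
          have hbound : L ^ n * (k - 1) + (L ^ n - k) < L ^ (2*n) := by
            have h4 : L ^ n * (k - 1) ≤ L ^ n * (L ^ n - 1) := Nat.mul_le_mul_left _ (by omega)
            omega
          rw [key]
          simp only [genTM]
          rw [hsplit3 (L+1) (k-1) (L ^ n - k) (by omega) hbound, hsL1]
          have hc : L ^ n - 1 - (k - 1) = L ^ n - k := by omega
          have h5 := sd_compl hL1 n (k - 1) (by omega)
          rw [hc] at h5
          have h6 : (((Nat.digits L (k-1)).sum + (Nat.digits L (L ^ n - k)).sum : ℕ) : ZMod L)
              = 0 := by rw [h5]; exact hnz0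
          push_cast at h6 ⊢
          linear_combination h6
      · -- case 3 : right extension
        set m := j - (L - 1) - L ^ n with hm
        have hm1 : 1 ≤ m := by omega
        have hmL : m ≤ L := by omega
        have hmz : (m : ℤ) = (j : ℤ) - (L : ℤ) + 1 - ((L ^ n : ℕ) : ℤ) := by omega
        push_cast at hmz
        rcases eq_or_lt_of_le hm1 with hm2 | hm2
        · -- m = 1
          have hjz : (j : ℤ) = (L : ℤ) + ((L ^ n : ℕ) : ℤ) := by omega
          push_cast at hjz
          have key : L ^ (2*n) * L + (L ^ n * (L ^ n - (L - 1)) + (L - 1)) + j * (L ^ n - 1)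
              = L ^ (2*n) * (L + 1) + (L ^ n * (L ^ n - 1) + (L ^ n - 1)) := by
            zify [show L - 1 ≤ L ^ n by omega, show (1:ℕ) ≤ L ^ n by omega,
                  show (1:ℕ) ≤ L by omega]
            linear_combination ((L:ℤ)^n - 1) * hjz + hMz'
          have hbound : L ^ n * (L ^ n - 1) + (L ^ n - 1) < L ^ (2*n) := by omega
          rw [key]
          simp only [genTM]
          rw [hsplit3 (L+1) (L ^ n - 1) (L ^ n - 1) (by omega) hbound, hsL1]
          have hc0 : (Nat.digits L (L ^ n - 1)).sum = n * (L - 1) := by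
            have h5 := sd_compl hL1 n 0 hP
            simpa using h5
          rw [hc0, Nat.cast_add, Nat.cast_add, hnz0]
          norm_num
        · -- 2 ≤ m ≤ L
          have key : L ^ (2*n) * L + (L ^ n * (L ^ n - (L - 1)) + (L - 1)) + j * (L ^ n - 1)
              = L ^ (2*n) * (L + 2) + (L ^ n * (m - 2) + (L ^ n - m)) := by
            zify [show L - 1 ≤ L ^ n by omega, show (1:ℕ) ≤ L ^ n by omega,
                  show (1:ℕ) ≤ L by omega, show 2 ≤ m from hm2, show m ≤ L ^ n by omega]
            linear_combination (1 - (L:ℤ)^n) * hmz - 2 * hMz'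
          have hbound : L ^ n * (m - 2) + (L ^ n - m) < L ^ (2*n) := by
            have h4 : L ^ n * (m - 2) ≤ L ^ n * (L ^ n - 1) := Nat.mul_le_mul_left _ (by omega)
            omega
          rw [key]
          simp only [genTM]
          rw [hsplit3 (L+2) (m-2) (L ^ n - m) (by omega) hbound]
          have hc : L ^ n - 1 - (m - 1) = L ^ n - m := by omega
          have h5 := hA (m - 1) (by omega)
          rw [hc, sd_single hL1 (m-1) (by omega)] at h5
          rw [sd_single hL1 (m-2) (by omega)]
          push_cast [h5, Nat.cast_sub hm1, Nat.cast_sub (show 2 ≤ m by omega)]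
          linear_combination hsL2 + (Nat.cast_list_sum (R := ZMod L) (Nat.digits L (L+2))).symm
  intro j hj
  have h0 := claim 0 (by omega)
  rw [Nat.zero_mul, Nat.add_zero] at h0
  exact (claim j hj).trans h0.symm
end

section
/- The Rudin–Shapiro sequence u contains no infinite monochromatic arithmetic progression: there do not exist s ∈ ℕ, d ≥ 1 and ε ∈ {1,−1} with u_{s+nd} = ε for all n ∈ ℕ. -/
/-- `rsCount n` counts the (possibly overlapping) occurrences of the block `11`
in the binary expansion of `n`. -/
def rsCount (n : ℕ) : ℕ :=
  ((Finset.range n).filter (fun i => n.testBit i && n.testBit (i + 1))).card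

/-- The Rudin–Shapiro sequence `u n = (−1)^{rsCount n}`. -/
def rudinShapiro (n : ℕ) : ℤ := (-1) ^ (rsCount n)

lemma rsCount_eq_sum {n M : ℕ} (h : n ≤ M) :
    rsCount n = ∑ i ∈ Finset.range M, (if n.testBit i && n.testBit (i+1) then 1 else 0) := by
  rw [rsCount, Finset.card_filter]
  apply Finset.sum_subset (Finset.range_subset_range.2 h)
  intro i _ hni
  simp only [Finset.mem_range, not_lt] at hni
  have : n.testBit i = false :=
    Nat.testBit_lt_two_pow (lt_of_le_of_lt hni (Nat.lt_two_pow_self (n := i)))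
  simp [this]

lemma rsCount_div2 (n : ℕ) :
    rsCount n = (if n % 4 = 3 then 1 else 0) + rsCount (n / 2) := by
  rw [rsCount_eq_sum (Nat.le_succ n), Finset.sum_range_succ']
  have h0 : (n.testBit 0 && n.testBit (0+1)) = decide (n % 4 = 3) := by
    rw [Nat.testBit_add_one, Nat.testBit_zero, Nat.testBit_zero, ← Bool.decide_and]
    exact decide_eq_decide.mpr (by omega)
  have hstep : ∀ i, (if n.testBit (i+1) && n.testBit (i+1+1) then (1:ℕ) else 0)
      = (if (n/2).testBit i && (n/2).testBit (i+1) then 1 else 0) := by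
    intro i
    rw [Nat.testBit_add_one n i, Nat.testBit_add_one n (i+1)]
  rw [Finset.sum_congr rfl (fun i _ => hstep i), ← rsCount_eq_sum (Nat.div_le_self n 2), h0]
  by_cases h : n % 4 = 3 <;> simp [h, Nat.add_comm]

lemma rsCount_zero : rsCount 0 = 0 := rfl
lemma rsCount_one : rsCount 1 = 0 := by decide
lemma rsCount_two : rsCount 2 = 0 := by decide
lemma rsCount_three : rsCount 3 = 1 := by decide

lemma rsCount_split (y : ℕ) : ∀ k x, x < 2^k →
    rsCount (x + 2^(k+1) * y) = rsCount x + rsCount y := by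
  intro k
  induction k with
  | zero =>
    intro x hx
    have hx0 : x = 0 := by omega
    subst hx0
    have h := rsCount_div2 (2^(0+1) * y)
    have h1 : (2^(0+1) * y) % 4 ≠ 3 := by omega
    have h2 : (2^(0+1) * y) / 2 = y := by omega
    rw [h1 |> if_neg] at h
    rw [h2] at h
    simpa [rsCount_zero] using h
  | succ k ih =>
    intro x hx
    have hp2 : (2:ℕ)^(k+1) = 2 * 2^k := by ring
    have hy : 2^(k+1+1) * y = 4 * (2^k * y) := by ring
    have hy2 : 2^(k+1) * y = 2 * (2^k * y) := by ring
    have h2 : (x + 2^(k+1+1) * y) / 2 = x/2 + 2^(k+1)*y := by omega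
    have h4 : (x + 2^(k+1+1) * y) % 4 = x % 4 := by omega
    have hx2 : x / 2 < 2^k := by omega
    rw [rsCount_div2 (x + 2^(k+1+1) * y), h2, h4, ih (x/2) hx2, rsCount_div2 x]
    ring

lemma rsCount_pow_add_two {m : ℕ} (hm : 3 ≤ m) : rsCount (2^m + 2) = 0 := by
  obtain ⟨m', rfl⟩ : ∃ m', m = m' + 1 := ⟨m-1, by omega⟩
  have h2 : (2:ℕ) < 2^m' := by
    calc (2:ℕ) < 2^2 := by norm_num
    _ ≤ 2^m' := Nat.pow_le_pow_right (by norm_num) (by omega)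
  have h := rsCount_split 1 m' 2 h2
  rw [rsCount_one, rsCount_two] at h
  simpa [Nat.add_comm] using h

/-- the Rudin–Shapiro sequence contains no infinite
monochromatic arithmetic progression. -/
theorem rudinShapiro_no_infinite_progression :
    ¬ ∃ (s d : ℕ) (ε : ℤ), 1 ≤ d ∧ (ε = 1 ∨ ε = -1) ∧
      ∀ n : ℕ, rudinShapiro (s + n * d) = ε := by
  rintro ⟨s, d, ε, hd, hε, hu⟩
  obtain ⟨a, e, he, rfl⟩ := Nat.exists_eq_two_pow_mul_odd (show d ≠ 0 by omega)
  have he1 : 1 ≤ e := he.pos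
  obtain ⟨e', rfl⟩ : ∃ e', e = e' + 1 := ⟨e - 1, by omega⟩
  set e := e' + 1 with hedef
  set m := 3 * e.totient with hmdef
  have hm3 : 3 ≤ m := by
    have := Nat.totient_pos.mpr (show 0 < e by omega)
    omega
  have h2m : 2^m ≡ 1 [MOD e] := by
    have h := Nat.ModEq.pow_totient ((Nat.coprime_two_left).mpr he)
    have hh : (2:ℕ)^m = (2^e.totient)^3 := by rw [← pow_mul]; congr 1; ring
    rw [hh]
    simpa using h.pow 3
  set r0 := s % 2^a with hr0def
  have hr0 : r0 < 2^a := Nat.mod_lt _ (Nat.two_pow_pos a)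
  set c := s + (r0 + 3) * e' with hcdef
  set B := m * (a + 2) with hBdef
  set A := B + 3 * m with hAdef
  have haB : a + 2 ≤ B := by
    calc a + 2 = 1 * (a + 2) := by ring
    _ ≤ m * (a + 2) := Nat.mul_le_mul_right _ (by omega)
  have h2B : (2:ℕ)^B ≡ 1 [MOD e] := by
    have hh : (2:ℕ)^B = (2^m)^(a+2) := by rw [← pow_mul]
    rw [hh]; simpa using h2m.pow (a+2)
  have h2A : (2:ℕ)^A ≡ 1 [MOD e] := by
    have hh : (2:ℕ)^A = (2^m)^(a+5) := by rw [← pow_mul]; congr 1; ring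
    rw [hh]; simpa using h2m.pow (a+5)
  have key : ∀ x : ℕ, x ≡ 3 [MOD e] → ∃ n, s + n * (2^a * e) = c * 2^A + x * 2^B + r0 := by
    intro x hx3
    set N := c * 2^A + x * 2^B + r0 with hN
    have hcA : c ≤ c * 2^A := Nat.le_mul_of_pos_right c (Nat.two_pow_pos A)
    have hsN : s ≤ N := by omega
    have hmod2a : N ≡ s [MOD 2^a] := by
      have hdvd : 2^a ∣ c * 2^A + x * 2^B := by
        have h1 : (2:ℕ)^a ∣ 2^A := pow_dvd_pow 2 (by omega)
        have h2 : (2:ℕ)^a ∣ 2^B := pow_dvd_pow 2 (by omega)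
        exact Dvd.dvd.add (h1.mul_left c) (h2.mul_left x)
      calc N ≡ 0 + r0 [MOD 2^a] :=
            Nat.ModEq.add_right r0 ((Nat.modEq_zero_iff_dvd).mpr hdvd)
        _ = r0 := by omega
        _ ≡ s [MOD 2^a] := Nat.mod_modEq s (2^a)
    have hmode : N ≡ s [MOD e] := by
      have h1 : N ≡ c * 1 + x * 1 + r0 [MOD e] :=
        Nat.ModEq.add_right r0 (((Nat.ModEq.refl c).mul h2A).add ((Nat.ModEq.refl x).mul h2B))
      have h2 : c * 1 + x * 1 + r0 ≡ c + 3 + r0 [MOD e] := by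
        simp only [mul_one]
        exact Nat.ModEq.add_right r0 ((Nat.ModEq.refl c).add hx3)
      have h3 : c + 3 + r0 = s + (r0 + 3) * e := by rw [hcdef, hedef]; ring
      have h4 : s + (r0 + 3) * e ≡ s [MOD e] := by
        simp [Nat.ModEq, Nat.add_mul_mod_self_right]
      calc N ≡ c * 1 + x * 1 + r0 [MOD e] := h1
        _ ≡ c + 3 + r0 [MOD e] := h2
        _ = s + (r0 + 3) * e := h3
        _ ≡ s [MOD e] := h4
    have hco : Nat.Coprime (2^a) e := Nat.Coprime.pow_left a (Nat.coprime_two_left.mpr he)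
    have hmodd : N ≡ s [MOD 2^a * e] := (Nat.modEq_and_modEq_iff_modEq_mul hco).mp ⟨hmod2a, hmode⟩
    have hdvd2 : (2^a * e) ∣ N - s := (Nat.modEq_iff_dvd' hsN).mp hmodd.symm
    refine ⟨(N - s) / (2^a * e), ?_⟩
    have := Nat.div_mul_cancel hdvd2
    omega
  obtain ⟨A', hA'⟩ : ∃ A', A = A' + 1 := ⟨A - 1, by omega⟩
  obtain ⟨B', hB'⟩ : ∃ B', B = B' + 1 := ⟨B - 1, by omega⟩
  have count : ∀ x : ℕ, x ≤ 2^(m+1) →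
      rsCount (c * 2^A + x * 2^B + r0) = rsCount r0 + rsCount x + rsCount c := by
    intro x hx
    have hlow : x * 2^B + r0 < 2^A' := by
      have h1 : x * 2^B ≤ 2^(m+1) * 2^B := Nat.mul_le_mul_right _ hx
      have h2 : (2:ℕ)^(m+1) * 2^B = 2^(B+m+1) := by rw [← pow_add]; congr 1; omega
      have h3 : (2:ℕ)^a ≤ 2^B := Nat.pow_le_pow_right (by norm_num) (by omega)
      have h4 : (2:ℕ)^(B+m+2) = 2^(B+m+1) + 2^(B+m+1) := by ring
      have h5 : (2:ℕ)^B ≤ 2^(B+m+1) := Nat.pow_le_pow_right (by norm_num) (by omega)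
      have h6 : (2:ℕ)^(B+m+2) ≤ 2^A' := Nat.pow_le_pow_right (by norm_num) (by omega)
      omega
    have e1 : c * 2^A + x * 2^B + r0 = (x * 2^B + r0) + 2^(A'+1) * c := by rw [← hA']; ring
    rw [e1, rsCount_split c A' _ hlow]
    have hr0B : r0 < 2^B' :=
      lt_of_lt_of_le hr0 (Nat.pow_le_pow_right (by norm_num) (by omega))
    have e2 : x * 2^B + r0 = r0 + 2^(B'+1) * x := by rw [← hB']; ring
    rw [e2, rsCount_split x B' r0 hr0B]
  have hx2 : 2^m + 2 ≡ 3 [MOD e] := by simpa using h2m.add_right 2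
  obtain ⟨n1, hn1⟩ := key 3 (Nat.ModEq.refl 3)
  obtain ⟨n2, hn2⟩ := key (2^m+2) hx2
  have hc3 : (3:ℕ) ≤ 2^(m+1) := by
    calc (3:ℕ) ≤ 2^2 := by norm_num
    _ ≤ 2^(m+1) := Nat.pow_le_pow_right (by norm_num) (by omega)
  have hc2 : 2^m + 2 ≤ 2^(m+1) := by
    have hh1 : (2:ℕ) ≤ 2^m := by
      calc (2:ℕ) = 2^1 := by norm_num
      _ ≤ 2^m := Nat.pow_le_pow_right (by norm_num) (by omega)
    have hh2 : (2:ℕ)^(m+1) = 2^m + 2^m := by ring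
    omega
  have k1 := count 3 hc3
  have k2 := count (2^m+2) hc2
  rw [rsCount_three] at k1
  rw [rsCount_pow_add_two hm3] at k2
  have u1 := hu n1
  rw [hn1, rudinShapiro, k1] at u1
  have u2 := hu n2
  rw [hn2, rudinShapiro, k2] at u2
  have hflip : ((-1:ℤ))^(rsCount r0 + 1 + rsCount c) = -((-1:ℤ))^(rsCount r0 + 0 + rsCount c) := by
    rw [show rsCount r0 + 1 + rsCount c = (rsCount r0 + 0 + rsCount c) + 1 by omega, pow_succ]
    ring
  rw [hflip, u2] at u1
  rcases hε with h|h <;> rw [h] at u1 <;> norm_num at u1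
end

section
/- For the Rudin–Shapiro sequence u and every n ≥ 2: u_k = 1 for all k = 2^{2n+1} + m(2^n + 1) with −1 ≤ m ≤ 2^{n−1}. Consequently A(2^n + 1) ≥ 2^{n−1} + 2 for all n ≥ 1. -/
lemma rsCount_eq (n N : ℕ) (h : n < 2 ^ N) :
    rsCount n = ((Finset.range N).filter (fun i => n.testBit i && n.testBit (i + 1))).card := by
  unfold rsCount
  congr 1
  apply Finset.ext
  intro i
  simp only [Finset.mem_filter, Finset.mem_range, Bool.and_eq_true]
  constructor
  · rintro ⟨hi, ht, ht'⟩
    refine ⟨?_, ht, ht'⟩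
    by_contra hN
    push_neg at hN
    have h2 : n < 2 ^ i := lt_of_lt_of_le h (Nat.pow_le_pow_right (by norm_num) hN)
    simp [Nat.testBit_lt_two_pow h2] at ht
  · rintro ⟨hi, ht, ht'⟩
    have h1 : 2 ^ i ≤ n := Nat.ge_two_pow_of_testBit ht
    have h2 : i < 2 ^ i := Nat.lt_two_pow_self (n := i)
    exact ⟨by omega, ht, ht'⟩

lemma testBit_split {a b s : ℕ} (ha : a < 2 ^ s) (j : ℕ) :
    (a + b * 2 ^ s).testBit j = if j < s then a.testBit j else b.testBit (j - s) := by
  split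
  · next h =>
    have h1 : (a + b * 2 ^ s) % 2 ^ s = a := by
      rw [Nat.add_mul_mod_self_right, Nat.mod_eq_of_lt ha]
    have h2 := Nat.testBit_mod_two_pow (a + b * 2 ^ s) s j
    rw [h1] at h2
    rw [h2]
    simp [h]
  · next h =>
    have h1 : (a + b * 2 ^ s) >>> s = b := by
      rw [Nat.shiftRight_eq_div_pow, Nat.add_mul_div_right _ _ (Nat.two_pow_pos s),
        Nat.div_eq_of_lt ha, Nat.zero_add]
    have h2 := Nat.testBit_shiftRight (i := s) (j := j - s) (a + b * 2 ^ s)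
    rw [h1, Nat.add_sub_cancel' (le_of_not_gt h)] at h2
    exact h2.symm

lemma rsCount_add_mul_pow {a b s : ℕ} (hs : 1 ≤ s) (ha : a < 2 ^ s)
    (hd : a.testBit (s - 1) = false ∨ b.testBit 0 = false) :
    rsCount (a + b * 2 ^ s) = rsCount a + rsCount b := by
  have hb : b < 2 ^ b := Nat.lt_two_pow_self (n := b)
  have hk : a + b * 2 ^ s < 2 ^ (s + b) := by
    calc a + b * 2 ^ s < 2 ^ s + b * 2 ^ s := by omega
    _ = (b + 1) * 2 ^ s := by ring
    _ ≤ 2 ^ b * 2 ^ s := Nat.mul_le_mul_right _ (by omega)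
    _ = 2 ^ (s + b) := by rw [pow_add]; ring
  rw [rsCount_eq _ (s + b) hk, rsCount_eq a s ha, rsCount_eq b b hb,
    Finset.card_filter, Finset.card_filter, Finset.card_filter, Finset.sum_range_add]
  congr 1
  · apply Finset.sum_congr rfl
    intro i hi
    rw [Finset.mem_range] at hi
    rw [testBit_split ha i, testBit_split ha (i + 1), if_pos hi]
    by_cases h1 : i + 1 < s
    · rw [if_pos h1]
    · have hiS : i + 1 = s := by omega
      rw [if_neg h1, show i + 1 - s = 0 by omega]
      have haS : a.testBit (i + 1) = false := by
        rw [hiS]; exact Nat.testBit_lt_two_pow ha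
      rw [haS]
      rcases hd with hd | hd
      · rw [show i = s - 1 by omega, hd]
        simp
      · rw [hd]
  · apply Finset.sum_congr rfl
    intro j hj
    rw [testBit_split ha (s + j), testBit_split ha (s + j + 1),
      if_neg (by omega : ¬ s + j < s), if_neg (by omega : ¬ s + j + 1 < s),
      show s + j - s = j by omega, show s + j + 1 - s = j + 1 by omega]

/-- for the Rudin–Shapiro sequence and every `n ≥ 2`,
`u_k = 1` for all `k = 2^{2n+1} + m(2^n + 1)` with `−1 ≤ m ≤ 2^{n−1}`;
consequently `A(2^n + 1) ≥ 2^{n−1} + 2` for all `n ≥ 1`. -/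
theorem rudinShapiro_prog_pow_add_one :
    (∀ n : ℕ, 2 ≤ n → ∀ m : ℤ, -1 ≤ m → m ≤ 2 ^ (n - 1) →
      rudinShapiro ((2 ^ (2 * n + 1) + m * (2 ^ n + 1)).toNat) = 1) ∧
    (∀ n : ℕ, 1 ≤ n → ∃ s : ℕ, ∀ j < 2 ^ (n - 1) + 2,
      rudinShapiro (s + j * (2 ^ n + 1)) = rudinShapiro s) := by
  have part1 : ∀ n : ℕ, 2 ≤ n → ∀ m : ℤ, -1 ≤ m → m ≤ 2 ^ (n - 1) →
      rudinShapiro ((2 ^ (2 * n + 1) + m * (2 ^ n + 1)).toNat) = 1 := by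
    intro n hn m hm1 hm2
    have hpow : (2 : ℕ) ^ (n - 1) < 2 ^ n := Nat.pow_lt_pow_right one_lt_two (by omega)
    rcases eq_or_lt_of_le hm1 with rfl | hm
    · -- m = -1
      have h1n : (1 : ℕ) ≤ 2 ^ n := Nat.one_le_two_pow
      have key : ((2 : ℤ) ^ (2 * n + 1) + -1 * (2 ^ n + 1))
          = (((2 ^ n - 1) + (2 ^ n - 1) * 2 ^ (n + 1) : ℕ) : ℤ) := by
        push_cast [Nat.cast_sub h1n]
        rw [show 2 * n + 1 = n + (n + 1) by ring, pow_add]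
        ring
      rw [key, Int.toNat_natCast]
      unfold rudinShapiro
      have hlt : 2 ^ n - 1 < 2 ^ (n + 1) := by
        have : (2 : ℕ) ^ (n + 1) = 2 * 2 ^ n := by rw [pow_succ]; ring
        omega
      have hbit : (2 ^ n - 1).testBit (n + 1 - 1) = false := by
        rw [Nat.add_sub_cancel]
        exact Nat.testBit_lt_two_pow (by omega)
      rw [rsCount_add_mul_pow (by omega) hlt (Or.inl hbit)]
      exact Even.neg_one_pow ⟨_, rfl⟩
    · -- m ≥ 0
      have hm0 : 0 ≤ m := by omega
      set m' : ℕ := m.toNat with hm'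
      have hmm : (m' : ℤ) = m := Int.toNat_of_nonneg hm0
      have hcast : ((2 ^ (n - 1) : ℕ) : ℤ) = 2 ^ (n - 1) := by push_cast; ring
      have hm2' : m' ≤ 2 ^ (n - 1) := by omega
      have key : ((2 : ℤ) ^ (2 * n + 1) + m * (2 ^ n + 1))
          = ((m' + (m' + 2 ^ (n + 1)) * 2 ^ n : ℕ) : ℤ) := by
        push_cast [hmm]
        rw [show 2 * n + 1 = (n + 1) + n by ring, pow_add]
        ring
      rw [key, Int.toNat_natCast]
      unfold rudinShapiro
      have hm'n : m' < 2 ^ n := by omega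
      have hd : m'.testBit (n - 1) = false ∨ (m' + 2 ^ (n + 1)).testBit 0 = false := by
        by_cases hlt : m' < 2 ^ (n - 1)
        · exact Or.inl (Nat.testBit_lt_two_pow hlt)
        · right
          have he : m' = 2 ^ (n - 1) := by omega
          have d1 : 2 ∣ 2 ^ (n - 1) := dvd_pow_self 2 (by omega)
          have d2 : 2 ∣ 2 ^ (n + 1) := dvd_pow_self 2 (by omega)
          rw [Nat.testBit_zero, he]
          simp only [decide_eq_false_iff_not]
          omega
      rw [rsCount_add_mul_pow (by omega) hm'n hd]
      have h2 : rsCount (m' + 2 ^ (n + 1)) = rsCount m' + rsCount 1 := by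
        have hm'n1 : m' < 2 ^ (n + 1) := by
          have : (2 : ℕ) ^ (n + 1) = 2 * 2 ^ n := by rw [pow_succ]; ring
          omega
        have hbit : m'.testBit (n + 1 - 1) = false := by
          rw [Nat.add_sub_cancel]; exact Nat.testBit_lt_two_pow hm'n
        have := rsCount_add_mul_pow (a := m') (b := 1) (s := n + 1)
          (by omega) hm'n1 (Or.inl hbit)
        simpa using this
      rw [h2, show rsCount 1 = 0 by decide]
      exact Even.neg_one_pow ⟨rsCount m', by ring⟩
  refine ⟨part1, ?_⟩
  intro n hn
  rcases eq_or_lt_of_le hn with rfl | h2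
  · exact ⟨2, by intro j hj; interval_cases j <;> decide⟩
  · have hn2 : 2 ≤ n := h2
    refine ⟨2 ^ (2 * n + 1) - 2 ^ n - 1, ?_⟩
    intro j hj
    have h1n : (1 : ℕ) ≤ 2 ^ n := Nat.one_le_two_pow
    have hbig : 2 ^ n + 1 ≤ 2 ^ (2 * n + 1) := by
      have h := Nat.pow_le_pow_right (by norm_num : 1 ≤ 2) (by omega : n + 1 ≤ 2 * n + 1)
      have : (2 : ℕ) ^ (n + 1) = 2 * 2 ^ n := by rw [pow_succ]; ring
      omega
    have hcastS : ((2 ^ (2 * n + 1) - 2 ^ n - 1 : ℕ) : ℤ) = 2 ^ (2 * n + 1) - 2 ^ n - 1 := by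
      rw [Nat.cast_sub (by omega), Nat.cast_sub (by omega)]
      push_cast
      ring
    have hcast1 : ((2 ^ (n - 1) : ℕ) : ℤ) = 2 ^ (n - 1) := by push_cast; ring
    have hm1 : (-1 : ℤ) ≤ (j : ℤ) - 1 := by omega
    have hm2 : ((j : ℤ) - 1) ≤ 2 ^ (n - 1) := by omega
    have hm1' : (-1 : ℤ) ≤ -1 := le_refl _
    have hm2' : (-1 : ℤ) ≤ 2 ^ (n - 1) := by
      have := pow_pos (by norm_num : (0 : ℤ) < 2) (n - 1)
      omega
    have e1 : (2 ^ (2 * n + 1) - 2 ^ n - 1) + j * (2 ^ n + 1)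
        = ((2 : ℤ) ^ (2 * n + 1) + ((j : ℤ) - 1) * (2 ^ n + 1)).toNat := by
      have : ((2 : ℤ) ^ (2 * n + 1) + ((j : ℤ) - 1) * (2 ^ n + 1))
          = (((2 ^ (2 * n + 1) - 2 ^ n - 1) + j * (2 ^ n + 1) : ℕ) : ℤ) := by
        push_cast [hcastS]
        ring
      rw [this, Int.toNat_natCast]
    have e0 : (2 ^ (2 * n + 1) - 2 ^ n - 1 : ℕ)
        = ((2 : ℤ) ^ (2 * n + 1) + (-1) * (2 ^ n + 1)).toNat := by
      have : ((2 : ℤ) ^ (2 * n + 1) + (-1) * (2 ^ n + 1))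
          = ((2 ^ (2 * n + 1) - 2 ^ n - 1 : ℕ) : ℤ) := by
        rw [hcastS]; ring
      rw [this, Int.toNat_natCast]
    rw [e1, part1 n hn2 _ hm1 hm2, e0, part1 n hn2 _ hm1' hm2']
end

section
/- Arrange the word ρ^{2n−1}(v) ∈ {1,−1}^{2^{2n}} (Rudin–Shapiro, each letter of {v,ṽ,w,w̃} interpreted as a 2-letter word over {1,−1} with v=11, w=1(−1), tilde = negation) as a 2^n × 2^n matrix (a_{i,j}) read row by row. Then a_{j,j} = 1 for all 0 ≤ j ≤ 2^{n−1} − 1. -/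
/-- A letter of the staggered Rudin–Shapiro substitution: `(d, s)` where
`d` is the digit (`false` for `v`, `true` for `w`) and `s` the spin. -/
abbrev RSLetter := Bool × Bool

/-- The staggered Rudin–Shapiro substitution `v↦vw, w↦vw̃, ṽ↦ṽw̃, w̃↦ṽw`. -/
def rsSub (a : RSLetter) : List RSLetter := [(false, a.2), (true, xor a.2 a.1)]

/-- Extension of `rsSub` to words by concatenation. -/
def rsSubW (l : List RSLetter) : List RSLetter := l.flatMap rsSub

/-- Sign of a spin: untilded ↦ `1`, tilded ↦ `−1`. -/
def rsSgn (b : Bool) : ℤ := if b then -1 else 1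

/-- The word `ρ^{2n−1}(v)` written over `{1,−1}`: each letter is interpreted
as a two-letter word, `v = 1 1`, `w = 1 (−1)`, tilde negating every letter. -/
def rsBlock (n : ℕ) : List ℤ :=
  (rsSubW^[2 * n - 1] [((false, false) : RSLetter)]).flatMap
    (fun a => [rsSgn a.2, rsSgn (xor a.2 a.1)])

/-- Rudin–Shapiro parity: number of adjacent `11` pairs in binary, mod 2. -/
def spinFun : ℕ → Bool
  | 0 => false
  | (m+1) => xor ((m+1).testBit 0 && (m+1).testBit 1) (spinFun ((m+1)/2))
  decreasing_by exact Nat.div_lt_self (by omega) (by omega)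

lemma spinFun_rec (m : ℕ) (hm : m ≠ 0) :
    spinFun m = xor (m.testBit 0 && m.testBit 1) (spinFun (m/2)) := by
  cases m with
  | zero => simp at hm
  | succ k => rw [spinFun]

lemma spinFun_zero : spinFun 0 = false := by rw [spinFun]

lemma spinFun_double (b : ℕ) : spinFun (2 * b) = spinFun b := by
  rcases Nat.eq_zero_or_pos b with rfl | hb
  · rfl
  · rw [spinFun_rec (2*b) (by omega), Nat.testBit_zero]
    have h2 : (2*b) % 2 = 0 := by omega
    have h3 : (2*b) / 2 = b := by omega
    simp [h2, h3]

lemma spinFun_split : ∀ k a b : ℕ, a < 2^k →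
    spinFun (a + b * (2^k * 2)) = xor (spinFun a) (spinFun b) := by
  intro k
  induction k with
  | zero =>
    intro a b ha
    interval_cases a
    have h : (0:ℕ) + b * (2^0*2) = 2*b := by ring
    rw [h, spinFun_double, spinFun_zero, Bool.false_xor]
  | succ k ih =>
    intro a b ha
    set m := a + b * (2^(k+1) * 2) with hm
    rcases Nat.eq_zero_or_pos m with h0 | hpos
    · have hc : 0 < 2^(k+1) * 2 := by positivity
      have ha0 : a = 0 := by omega
      have hb0 : b = 0 := by
        by_contra hb
        have h1 : 1 ≤ b := by omega
        have h2 : 0 < b * (2^(k+1) * 2) := Nat.mul_pos (by omega) hc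
        omega
      subst ha0; subst hb0; simp [hm, spinFun_zero]
    · have hc : 0 < 2^k := by positivity
      have hdiv : m / 2 = a / 2 + b * (2^k * 2) := by
        have : m = a + 2 * (b * (2^k * 2)) := by rw [hm]; ring
        rw [this, Nat.add_mul_div_left _ _ (by norm_num : (0:ℕ) < 2)]
      have hb0 : m.testBit 0 = a.testBit 0 := by
        rw [Nat.testBit_zero, Nat.testBit_zero]
        have : m % 2 = a % 2 := by
          have : m = a + (b * 2^(k+1)) * 2 := by rw [hm]; ring
          omega
        rw [this]
      have hb1 : m.testBit 1 = a.testBit 1 := by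
        rw [show (1:ℕ) = 0 + 1 from rfl, Nat.testBit_succ, Nat.testBit_succ,
          Nat.testBit_zero, Nat.testBit_zero, hdiv]
        have : (a/2 + b * (2^k * 2)) % 2 = (a/2) % 2 := by
          have : a/2 + b * (2^k * 2) = a/2 + (b * 2^k) * 2 := by ring
          omega
        rw [this]
      have hih : spinFun (m/2) = xor (spinFun (a/2)) (spinFun b) := by
        rw [hdiv]; exact ih (a/2) b (by omega)
      rw [spinFun_rec m (by omega), hb0, hb1, hih]
      rcases Nat.eq_zero_or_pos a with rfl | hapos
      · simp
      · rw [spinFun_rec a (by omega)]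
        cases (a.testBit 0 && a.testBit 1) <;> cases spinFun (a/2) <;>
          cases spinFun b <;> rfl

lemma rsSubW_length (l : List RSLetter) : (rsSubW l).length = 2 * l.length := by
  induction l with
  | nil => rfl
  | cons a t ih =>
    simp only [rsSubW, List.flatMap_cons] at *
    simp [ih, rsSub]; ring

lemma rsIter_length (k : ℕ) :
    (rsSubW^[k] [((false, false) : RSLetter)]).length = 2^k := by
  induction k with
  | zero => rfl
  | succ k ih => rw [Function.iterate_succ_apply', rsSubW_length, ih, pow_succ]; ring

lemma flatMap_two_getD {α β : Type*} (f : α → List β)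
    (hf : ∀ a, (f a).length = 2) (z : α) (d : β) :
    ∀ (l : List α) (i : ℕ), i < 2 * l.length →
      (l.flatMap f).getD i d = (f (l.getD (i/2) z)).getD (i % 2) d := by
  intro l
  induction l with
  | nil => intro i hi; simp at hi
  | cons a t ih =>
    intro i hi
    rw [List.flatMap_cons]
    by_cases h2 : i < 2
    · rw [List.getD_append _ _ _ _ (by rw [hf]; omega)]
      have : i / 2 = 0 := by omega
      rw [this, List.getD_cons_zero]
      congr 1; omega
    · rw [List.getD_append_right _ _ _ _ (by rw [hf]; omega), hf]
      have hlen : i - 2 < 2 * t.length := by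
        simp only [List.length_cons] at hi; omega
      rw [ih (i-2) hlen]
      obtain ⟨q, hq⟩ : ∃ q, i / 2 = q + 1 := ⟨i/2 - 1, by omega⟩
      have h1 : (i-2)/2 = q := by omega
      have h2' : (i-2) % 2 = i % 2 := by omega
      rw [hq, h1, h2', List.getD_cons_succ]

lemma rsIter_getD : ∀ (k i : ℕ), i < 2^k →
    (rsSubW^[k] [((false, false) : RSLetter)]).getD i (false, false) =
      (i.testBit 0, spinFun i) := by
  intro k
  induction k with
  | zero =>
    intro i hi
    interval_cases i
    simp [spinFun_zero]
  | succ k ih =>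
    intro i hi
    rw [Function.iterate_succ_apply']
    have hlen : i < 2 * (rsSubW^[k] [((false, false) : RSLetter)]).length := by
      rw [rsIter_length]; rw [pow_succ] at hi; omega
    rw [rsSubW, flatMap_two_getD rsSub (fun a => rfl) (false, false) (false, false) _ i hlen,
      ih (i/2) (by rw [pow_succ] at hi; omega)]
    have hbit1 : i.testBit 1 = (i/2).testBit 0 := by
      rw [show (1:ℕ) = 0 + 1 from rfl, Nat.testBit_succ]
    rcases Nat.mod_two_eq_zero_or_one i with h | h
    · have hb0 : i.testBit 0 = false := by simp [Nat.testBit_zero, h]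
      rw [h]
      show (false, spinFun (i/2)) = (i.testBit 0, spinFun i)
      rcases Nat.eq_zero_or_pos i with rfl | hpos
      · rfl
      · rw [hb0, spinFun_rec i (by omega), hb0]; simp
    · have hb0 : i.testBit 0 = true := by simp [Nat.testBit_zero, h]
      rw [h]
      show (true, xor (spinFun (i/2)) ((i/2).testBit 0)) = (i.testBit 0, spinFun i)
      rw [hb0, spinFun_rec i (by omega), hb0, hbit1]
      simp [Bool.xor_comm]

lemma rsBlock_getD (n : ℕ) (hn : 1 ≤ n) (m : ℕ) (hm : m < 2^(2*n)) :
    (rsBlock n).getD m 0 = rsSgn (spinFun m) := by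
  rw [rsBlock]
  have hlen : m < 2 * (rsSubW^[2*n - 1] [((false, false) : RSLetter)]).length := by
    rw [rsIter_length]
    have : 2 * 2^(2*n-1) = 2^(2*n) := by
      rw [← pow_succ']
      congr 1; omega
    omega
  rw [flatMap_two_getD (fun a : RSLetter => [rsSgn a.2, rsSgn (xor a.2 a.1)])
    (fun a => rfl) (false, false) 0 _ m hlen,
    rsIter_getD (2*n-1) (m/2) (by rw [rsIter_length] at hlen; omega)]
  have hbit1 : m.testBit 1 = (m/2).testBit 0 := by
    rw [show (1:ℕ) = 0 + 1 from rfl, Nat.testBit_succ]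
  rcases Nat.mod_two_eq_zero_or_one m with h | h
  · have hb0 : m.testBit 0 = false := by simp [Nat.testBit_zero, h]
    rw [h]
    show rsSgn (spinFun (m/2)) = rsSgn (spinFun m)
    rcases Nat.eq_zero_or_pos m with rfl | hpos
    · rfl
    · rw [spinFun_rec m (by omega), hb0]; simp
  · have hb0 : m.testBit 0 = true := by simp [Nat.testBit_zero, h]
    rw [h]
    show rsSgn (xor (spinFun (m/2)) ((m/2).testBit 0)) = rsSgn (spinFun m)
    rw [spinFun_rec m (by omega), hb0, hbit1]
    simp [Bool.xor_comm]

/-- arranging `ρ^{2n−1}(v) ∈ {1,−1}^{2^{2n}}` as a `2^n × 2^n`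
matrix `(a_{i,j})` read row by row, the diagonal entries satisfy
`a_{j,j} = 1` for all `0 ≤ j ≤ 2^{n−1} − 1`. -/
theorem rsBlock_diagonal (n : ℕ) (hn : 1 ≤ n) (j : ℕ) (hj : j < 2 ^ (n - 1)) :
    (rsBlock n).getD (j * 2 ^ n + j) 0 = 1 := by
  have hX : 0 < 2^(n-1) := by positivity
  have hpow : 2^n = 2^(n-1) * 2 := by
    rw [← pow_succ]; congr 1; omega
  have hm : j * 2^n + j = j + j * (2^(n-1) * 2) := by rw [← hpow]; ring
  have hbound : j * 2^n + j < 2^(2*n) := by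
    have h2n : 2^(2*n) = 2^n * 2^n := by rw [two_mul, pow_add]
    have hj' : j < 2^(n-1) := hj
    nlinarith [hpow, h2n, Nat.one_le_two_pow (n := n-1)]
  rw [rsBlock_getD n hn _ hbound, hm, spinFun_split (n-1) j j hj]
  simp [rsSgn]
end

section
/- Let u be the Vandermonde sequence of order L ≥ 2. For every n ≥ 2, u_k = 1 for all k = L^{Ln+1} + m·(L^{(L−1)n} + L^{(L−2)n} + ⋯ + L^n + 1) with 0 ≤ m ≤ L^{n−1}. Consequently A((L^{nL}−1)/(L^n−1)) ≥ L^{n−1} + 1 for all n ≥ 1. -/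
open Complex in
/-- The Vandermonde sequence of order `L`:
`u n = ∏_i ω^{n_{i+1} n_i mod L}` where `ω = e^{−2πi/L}` and `n_i` are the
base-`L` digits of `n` (least significant first). -/
noncomputable def vandermondeSeq (L : ℕ) (n : ℕ) : ℂ :=
  ∏ i ∈ Finset.range n,
    (Complex.exp (-2 * Real.pi * Complex.I / L)) ^ ((n / L ^ (i + 1) % L) * (n / L ^ i % L) % L)

open Finset

private lemma vseq_eq_pow (L k : ℕ) :
    vandermondeSeq L k = Complex.exp (-2 * Real.pi * Complex.I / L) ^
      ∑ i ∈ range k, (k / L ^ (i + 1) % L) * (k / L ^ i % L) % L :=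
  Finset.prod_pow_eq_pow_sum _ _ _

private lemma omega_pow (L : ℕ) (hL : 1 ≤ L) {S : ℕ} (h : L ∣ S) :
    Complex.exp (-2 * Real.pi * Complex.I / L) ^ S = 1 := by
  obtain ⟨c, rfl⟩ := h
  rw [pow_mul, ← Complex.exp_nat_mul]
  have hL0 : (L : ℂ) ≠ 0 := Nat.cast_ne_zero.mpr (by omega)
  have h1 : (L : ℂ) * (-2 * Real.pi * Complex.I / L) = ((-1 : ℤ) : ℂ) * (2 * Real.pi * Complex.I) := by
    field_simp
    ring
  rw [h1, Complex.exp_int_mul_two_pi_mul_I, one_pow]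

private lemma vseq_eq_one (L k : ℕ) (hL : 2 ≤ L)
    (h : L ∣ ∑ i ∈ range k, (k / L ^ (i + 1) % L) * (k / L ^ i % L) % L) :
    vandermondeSeq L k = 1 := by
  rw [vseq_eq_pow]; exact omega_pow L (by omega) h

private lemma vgeom_lt (L c m : ℕ) (hL : 1 ≤ L) (hm : m < L ^ c) :
    ∀ q, (∑ j ∈ range q, m * L ^ (j * c)) < L ^ (q * c) := by
  intro q
  induction q with
  | zero => simp
  | succ q ih =>
    rw [Finset.sum_range_succ]
    calc (∑ j ∈ range q, m * L ^ (j * c)) + m * L ^ (q * c)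
        < L ^ (q * c) + m * L ^ (q * c) := by omega
      _ = (1 + m) * L ^ (q * c) := by ring
      _ ≤ L ^ c * L ^ (q * c) := Nat.mul_le_mul_right _ (by omega)
      _ = L ^ ((q + 1) * c) := by rw [← pow_add]; congr 1; ring

private lemma sum_split (f : ℕ → ℕ) (a b : ℕ) (h : a ≤ b) :
    ∑ j ∈ range b, f j = (∑ j ∈ range a, f j) + ∑ j ∈ range (b - a), f (a + j) := by
  rw [← Finset.sum_range_add, Nat.add_sub_cancel' h]

-- digit of m * D at position q*n + t

private lemma digit_low (L n m : ℕ) (hL : 2 ≤ L) (hm : m < L ^ n) :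
    ∀ q t, q < L → t < n →
      ((m * ∑ j ∈ range L, L ^ (j * n)) / L ^ (q * n + t)) % L = m / L ^ t % L := by
  intro q t hq ht
  have hL1 : 1 ≤ L := by omega
  rw [Finset.mul_sum, sum_split _ q L (le_of_lt hq)]
  have h2 : ∑ j ∈ range (L - q), m * L ^ ((q + j) * n)
      = L ^ (q * n) * ∑ j ∈ range (L - q), m * L ^ (j * n) := by
    rw [Finset.mul_sum]
    refine Finset.sum_congr rfl fun j _ => ?_
    rw [add_mul, pow_add]; ring
  rw [h2]
  have hlo := vgeom_lt L n m hL1 hm q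
  have hp : 0 < L ^ (q * n) := Nat.pow_pos (by omega)
  rw [pow_add, ← Nat.div_div_eq_div_mul, Nat.add_mul_div_left _ _ hp,
    Nat.div_eq_of_lt hlo, zero_add]
  -- now : (∑ j ∈ range (L-q), m * L^(j*n)) / L^t % L = m / L^t % L
  have hM : ∑ j ∈ range (L - q), m * L ^ (j * n)
      = L ^ t * (L ^ (n - t - 1) * (L * ∑ j ∈ range (L - q - 1), m * L ^ (j * n))) + m := by
    have h3 : L - q = (L - q - 1) + 1 := by omega
    rw [h3, Finset.sum_range_succ']
    simp only [zero_mul, pow_zero, mul_one]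
    congr 1
    rw [Finset.mul_sum, Finset.mul_sum, Finset.mul_sum]
    refine Finset.sum_congr rfl fun j _ => ?_
    have h4 : (j + 1) * n = j * n + ((t + (n - t - 1)) + 1) := by rw [add_mul, one_mul]; omega
    rw [h4, pow_add, pow_add, pow_add, pow_one]
    ring
  rw [hM, Nat.mul_add_div (Nat.pow_pos (a := L) (by omega)), mul_comm (L ^ (n - t - 1))]
  rw [mul_assoc, Nat.mul_add_mod]

private lemma main1 (L n m : ℕ) (hL : 2 ≤ L) (hn : 2 ≤ n) (hm : m ≤ L ^ (n - 1)) :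
    vandermondeSeq L (L ^ (L * n + 1) + m * ∑ j ∈ Finset.range L, L ^ (j * n)) = 1 := by
  have hL1 : 1 < L := by omega
  have hLpos : 0 < L := by omega
  have hLn : 4 ≤ L * n := Nat.mul_le_mul hL hn
  set D : ℕ := ∑ j ∈ range L, L ^ (j * n) with hD
  set k : ℕ := L ^ (L * n + 1) + m * D with hk
  have hmn : m < L ^ n := lt_of_le_of_lt hm (Nat.pow_lt_pow_right hL1 (by omega))
  have hr : m * D < L ^ (L * n) := by
    rw [hD, Finset.mul_sum]; exact vgeom_lt L n m (by omega) hmn L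
  have key : ∀ i, i ≤ L * n → k / L ^ i % L = (m * D) / L ^ i % L := by
    intro i hi
    have h1 : L ^ (L * n + 1) = L ^ i * (L * L ^ (L * n - i)) := by
      rw [← pow_succ', ← pow_add]; congr 1; omega
    rw [hk, h1, Nat.mul_add_div (Nat.pow_pos hLpos), Nat.mul_add_mod]
  have hd_low : ∀ i, i < L * n → k / L ^ i % L = m / L ^ (i % n) % L := by
    intro i hi
    have hn0 : 0 < n := by omega
    have hqlt : i / n < L := by
      rw [Nat.div_lt_iff_lt_mul hn0]; exact hi
    have hieq : i = (i / n) * n + i % n := (Nat.div_add_mod' i n).symm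
    have hdl := digit_low L n m hL hmn (i / n) (i % n) hqlt (Nat.mod_lt _ hn0)
    rw [← hieq] at hdl
    exact (key i (le_of_lt hi)).trans hdl
  have hd_Ln : k / L ^ (L * n) % L = 0 := by
    rw [key _ le_rfl, Nat.div_eq_of_lt hr, Nat.zero_mod]
  have hd_big : ∀ i, L * n + 2 ≤ i → k / L ^ i = 0 := by
    intro i hi
    apply Nat.div_eq_of_lt
    calc k < L ^ (L * n + 1) + L ^ (L * n + 1) := by
            have : L ^ (L * n) ≤ L ^ (L * n + 1) := Nat.pow_le_pow_right (by omega) (by omega)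
            omega
      _ = 2 * L ^ (L * n + 1) := by ring
      _ ≤ L * L ^ (L * n + 1) := Nat.mul_le_mul_right _ hL
      _ = L ^ (L * n + 2) := by rw [← pow_succ']
      _ ≤ L ^ i := Nat.pow_le_pow_right (by omega) hi
  have hE0 : ∀ i, L * n - 1 ≤ i →
      (k / L ^ (i + 1) % L) * (k / L ^ i % L) % L = 0 := by
    intro i hi
    by_cases h1 : i + 1 = L * n
    · rw [h1, hd_Ln, zero_mul, Nat.zero_mod]
    · by_cases h2 : i = L * n
      · rw [h2, hd_Ln, mul_zero, Nat.zero_mod]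
      · have h3 : L * n + 2 ≤ i + 1 := by omega
        rw [hd_big (i + 1) h3, Nat.zero_mod, zero_mul, Nat.zero_mod]
  set g : ℕ → ℕ := fun t => (m / L ^ ((t + 1) % n) % L) * (m / L ^ t % L) % L with hg
  have hEg : ∀ i, i < L * n - 1 →
      (k / L ^ (i + 1) % L) * (k / L ^ i % L) % L = g (i % n) := by
    intro i hi
    rw [hd_low i (by omega), hd_low (i + 1) (by omega), hg]
    have h1 : (i + 1) % n = (i % n + 1) % n := by
      rw [Nat.add_mod, Nat.mod_eq_of_lt (show 1 < n by omega)]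
    rw [h1]
  have hper : ∀ q, ∑ i ∈ range (q * n), g (i % n) = q * ∑ t ∈ range n, g t := by
    intro q
    induction q with
    | zero => simp
    | succ q ih =>
      have h1 : (q + 1) * n = q * n + n := by ring
      rw [h1, Finset.sum_range_add, ih]
      have h2 : ∀ t ∈ range n, g ((q * n + t) % n) = g t := by
        intro t ht
        rw [mem_range] at ht
        congr 1
        rw [mul_comm, Nat.mul_add_mod, Nat.mod_eq_of_lt ht]
      rw [Finset.sum_congr rfl h2]; ring
  have hg0 : g (n - 1) = 0 := by
    rw [hg]
    have h1 : (n - 1 + 1) % n = 0 := by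
      rw [show n - 1 + 1 = n by omega, Nat.mod_self]
    simp only [h1, pow_zero, Nat.div_one]
    rcases eq_or_lt_of_le hm with he | hlt
    · have h2 : m % L = 0 := by
        rw [he, show n - 1 = (n - 2) + 1 by omega, pow_succ, Nat.mul_mod_left]
      rw [h2, zero_mul, Nat.zero_mod]
    · rw [Nat.div_eq_of_lt hlt, Nat.zero_mod, mul_zero, Nat.zero_mod]
  -- assemble the sum
  apply vseq_eq_one L k hL
  have hk_big : L * n ≤ k := by
    have h1 : L * n + 1 < L ^ (L * n + 1) := Nat.lt_pow_self hL1
    omega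
  have hs1 : ∑ i ∈ range k, (k / L ^ (i + 1) % L) * (k / L ^ i % L) % L
      = ∑ i ∈ range (L * n - 1), (k / L ^ (i + 1) % L) * (k / L ^ i % L) % L := by
    refine (Finset.sum_subset (Finset.range_subset_range.mpr (by omega)) ?_).symm
    intro x hx hnx
    rw [mem_range] at hx; rw [mem_range] at hnx
    exact hE0 x (by omega)
  have hs2 : ∑ i ∈ range (L * n - 1), (k / L ^ (i + 1) % L) * (k / L ^ i % L) % L
      = ∑ i ∈ range (L * n - 1), g (i % n) :=
    Finset.sum_congr rfl fun i hi => hEg i (mem_range.mp hi)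
  have hsplit : L * n - 1 = (L - 1) * n + (n - 1) := by
    have h1 : (L - 1) * n = L * n - n := Nat.sub_one_mul _ _
    have h2 : n ≤ L * n := Nat.le_mul_of_pos_left n hLpos
    omega
  have hG : ∑ t ∈ range (n - 1), g t = ∑ t ∈ range n, g t := by
    conv_rhs => rw [show n = (n - 1) + 1 by omega]
    rw [Finset.sum_range_succ, hg0, add_zero]
  have hs3 : ∑ i ∈ range (L * n - 1), g (i % n) = L * ∑ t ∈ range n, g t := by
    rw [hsplit, Finset.sum_range_add, hper (L - 1)]
    have h3 : ∀ t ∈ range (n - 1), g (((L - 1) * n + t) % n) = g t := by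
      intro t ht
      rw [mem_range] at ht
      congr 1
      rw [mul_comm, Nat.mul_add_mod, Nat.mod_eq_of_lt (by omega)]
    rw [Finset.sum_congr rfl h3, hG]
    have h4 : (L - 1) * (∑ t ∈ range n, g t) = L * (∑ t ∈ range n, g t) - (∑ t ∈ range n, g t) :=
      Nat.sub_one_mul _ _
    have h5 : (∑ t ∈ range n, g t) ≤ L * (∑ t ∈ range n, g t) :=
      Nat.le_mul_of_pos_left _ hLpos
    omega
  exact ⟨∑ t ∈ range n, g t, by rw [hs1, hs2, hs3]⟩

private lemma nOne1 (L : ℕ) (hL : 2 ≤ L) : vandermondeSeq L (L ^ L) = 1 := by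
  have hdig : ∀ j, j ≠ L → L ^ L / L ^ j % L = 0 := by
    intro j hj
    rcases lt_or_gt_of_ne hj with hlt | hgt
    · have h1 : L ^ L = L ^ j * (L * L ^ (L - j - 1)) := by
        rw [← pow_succ', ← pow_add]; congr 1; omega
      rw [h1, Nat.mul_div_cancel_left _ (Nat.pow_pos (a := L) (by omega)), Nat.mul_mod_right]
    · rw [Nat.div_eq_of_lt (Nat.pow_lt_pow_right (by omega) hgt), Nat.zero_mod]
  rw [vseq_eq_pow]
  have hz : ∑ i ∈ range (L ^ L), (L ^ L / L ^ (i + 1) % L) * (L ^ L / L ^ i % L) % L = 0 := by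
    refine Finset.sum_eq_zero fun i _ => ?_
    by_cases h1 : i + 1 = L
    · rw [hdig i (by omega), mul_zero, Nat.zero_mod]
    · rw [hdig (i + 1) h1, zero_mul, Nat.zero_mod]
  rw [hz, pow_zero]

private lemma nOne2 (L : ℕ) (hL : 2 ≤ L) :
    vandermondeSeq L (L ^ L + ∑ j ∈ range L, L ^ j) = 1 := by
  have hLpos : 0 < L := by omega
  have hgeom : ∀ i, (∑ j ∈ range i, L ^ j) < L ^ i := by
    intro i
    have := vgeom_lt L 1 1 (by omega) (by rw [pow_one]; omega) i
    simpa using this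
  set k : ℕ := L ^ L + ∑ j ∈ range L, L ^ j with hk
  have hkeq : k = ∑ j ∈ range (L + 1), L ^ j := by
    rw [hk, Finset.sum_range_succ, add_comm]
  have hdig : ∀ i, i ≤ L → k / L ^ i % L = 1 := by
    intro i hi
    rw [hkeq, sum_split _ i (L + 1) (by omega)]
    have h2 : ∑ j ∈ range (L + 1 - i), L ^ (i + j)
        = L ^ i * ((L * ∑ j ∈ range (L - i), L ^ j) + 1) := by
      rw [show L + 1 - i = (L - i) + 1 by omega, Finset.sum_range_succ']
      have e1 : ∀ j ∈ range (L - i), L ^ (i + (j + 1)) = L ^ i * (L * L ^ j) := by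
        intro j _; rw [pow_add, pow_succ]; ring
      rw [Finset.sum_congr rfl e1, ← Finset.mul_sum, ← Finset.mul_sum, Nat.add_zero]
      ring
    rw [h2, Nat.add_mul_div_left _ _ (Nat.pow_pos hLpos),
      Nat.div_eq_of_lt (hgeom i), zero_add, Nat.mul_add_mod,
      Nat.mod_eq_of_lt (by omega)]
  have hbig : ∀ i, L + 1 ≤ i → k / L ^ i = 0 := by
    intro i hi
    apply Nat.div_eq_of_lt
    calc k < L ^ (L + 1) := by rw [hkeq]; exact hgeom (L + 1)
      _ ≤ L ^ i := Nat.pow_le_pow_right (by omega) hi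
  apply vseq_eq_one L k hL
  have hkL : L ≤ k := by
    have : L ≤ L ^ L := Nat.le_self_pow (by omega) L
    omega
  have hs1 : ∑ i ∈ range k, (k / L ^ (i + 1) % L) * (k / L ^ i % L) % L
      = ∑ i ∈ range L, (k / L ^ (i + 1) % L) * (k / L ^ i % L) % L := by
    refine (Finset.sum_subset (Finset.range_subset_range.mpr hkL) ?_).symm
    intro x hx hnx
    rw [mem_range] at hnx
    rw [hbig (x + 1) (by omega), Nat.zero_mod, zero_mul, Nat.zero_mod]
  have hs2 : ∑ i ∈ range L, (k / L ^ (i + 1) % L) * (k / L ^ i % L) % L = L := by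
    have h1 : ∀ i ∈ range L, (k / L ^ (i + 1) % L) * (k / L ^ i % L) % L = 1 := by
      intro i hi
      rw [mem_range] at hi
      rw [hdig i (by omega), hdig (i + 1) (by omega), mul_one, Nat.mod_eq_of_lt (by omega)]
    rw [Finset.sum_congr rfl h1]
    simp
  exact ⟨1, by rw [hs1, hs2, mul_one]⟩

/-- for the Vandermonde sequence of order `L ≥ 2` and every
`n ≥ 2`, `u_k = 1` for all `k = L^{Ln+1} + m·(L^{(L−1)n} + ⋯ + L^n + 1)` with
`0 ≤ m ≤ L^{n−1}`; consequently `A((L^{nL}−1)/(L^n−1)) ≥ L^{n−1} + 1` for all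
`n ≥ 1`. -/
theorem vandermondeSeq_progression (L : ℕ) (hL : 2 ≤ L) :
    (∀ n : ℕ, 2 ≤ n → ∀ m ≤ L ^ (n - 1),
      vandermondeSeq L (L ^ (L * n + 1) + m * ∑ j ∈ Finset.range L, L ^ (j * n)) = 1) ∧
    (∀ n : ℕ, 1 ≤ n → ∃ s : ℕ, ∀ j < L ^ (n - 1) + 1,
      vandermondeSeq L (s + j * ((L ^ (n * L) - 1) / (L ^ n - 1))) =
        vandermondeSeq L s) := by
  constructor
  · intro n hn m hm
    exact main1 L n m hL hn hm
  · intro n hn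
    rcases eq_or_lt_of_le hn with h1 | h1
    · -- n = 1
      refine ⟨L ^ L, fun j hj => ?_⟩
      have hd : (L ^ (n * L) - 1) / (L ^ n - 1) = ∑ i ∈ range L, L ^ i := by
        rw [← h1, one_mul, pow_one, Nat.geomSum_eq hL L]
      have hj2 : j < 2 := by
        rw [← h1] at hj; simpa using hj
      interval_cases j
      · simp
      · rw [hd, one_mul, nOne1 L hL, nOne2 L hL]
    · -- n ≥ 2
      have hn2 : 2 ≤ n := h1
      refine ⟨L ^ (L * n + 1), fun j hj => ?_⟩
      have h2 : 2 ≤ L ^ n := le_trans hL (Nat.le_self_pow (by omega) L)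
      have hd : (L ^ (n * L) - 1) / (L ^ n - 1) = ∑ i ∈ range L, L ^ (i * n) := by
        rw [pow_mul, ← Nat.geomSum_eq h2 L]
        exact Finset.sum_congr rfl fun i _ => by rw [← pow_mul, mul_comm]
      rw [hd]
      have h0 := main1 L n 0 hL hn2 (Nat.zero_le _)
      rw [zero_mul, add_zero] at h0
      rw [main1 L n j hL hn2 (by omega), h0]
end

section
/- Let ρ be a constant-length-L substitution on alphabet 𝒜 with a partition 𝒜 = 𝒜₁ ∪ ⋯ ∪ 𝒜ₙ inducing a supersubstitution ξ on {1,…,n} (so θ∘ρ = ξ∘θ for the induced coding θ). Suppose 𝒜₁ = {a₁} is a singleton, ξ is aperiodic, primitive, bijective with ξ_0 = id and column group G, and let v be the fixed point of ρ starting with a₁. Then for all k ≥ 1, v contains a monochromatic arithmetic progression of the letter a₁ of difference (L^{k|G|}−1)/(L^k−1) and length L^k, i.e., A_v((L^{k|G|}−1)/(L^k−1)) ≥ L^k. -/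
/-- Composition of the column permutations over the first `r` base-`L` digits. -/
def digitPerm {B : Type*} (L : ℕ) (τ : ℕ → Equiv.Perm B) : ℕ → ℕ → Equiv.Perm B
  | 0, _ => 1
  | r+1, m => τ (m % L) * digitPerm L τ r (m / L)

/-- supersubstitution lower bound. Let `ρ` be a length-`L`
substitution on `A` and `θ : A → B` a coding intertwining `ρ` with a
substitution `ξ` on `B` whose columns are the permutations `τ i`
(`θ∘ρ = ξ∘θ`). Suppose the part `θ⁻¹(b₁)` is the singleton `{a₁}`, `ξ` is
aperiodic, primitive, bijective with `τ 0 = id` and column group `G`, and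
`v` is the fixed point of `ρ` starting with `a₁`. Then for all `k ≥ 1`,
`v` contains a monochromatic arithmetic progression of the letter `a₁` of
difference `(L^{k|G|}−1)/(L^k−1)` and length `L^k`. -/
theorem supersubstitution_progression {A B : Type*} [Fintype A] [Fintype B]
    (L : ℕ) (hL : 2 ≤ L) (ρ : A → ℕ → A) (θ : A → B) (τ : ℕ → Equiv.Perm B)
    (hcomm : ∀ (a : A), ∀ i < L, θ (ρ a i) = τ i (θ a))
    (hτ0 : τ 0 = 1)
    (hprim : SubstPrimitive L (fun b i => τ i b))
    (haper : SubstAperiodic L (fun b i => τ i b))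
    (a₁ : A) (b₁ : B) (hθa₁ : θ a₁ = b₁)
    (hsingleton : ∀ a : A, θ a = b₁ → a = a₁)
    (v : ℕ → A) (hv : SubstFixedPoint L ρ v) (hv0 : v 0 = a₁)
    (k : ℕ) (hk : 1 ≤ k) :
    ∃ s : ℕ, ∀ j < L ^ k,
      v (s + j * ((L ^ (k * Nat.card (Subgroup.closure (τ '' Set.Iio L))) - 1) /
        (L ^ k - 1))) = a₁ := by
  classical
  have hL0 : 0 < L := by omega
  set G := Subgroup.closure (τ '' Set.Iio L) with hG
  set N := Nat.card G with hN
  set w : ℕ → B := fun m => θ (v m) with hw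
  have hwfix : ∀ m i, i < L → w (L * m + i) = τ i (w m) := by
    intro m i hi
    simp only [hw]
    rw [hv m i hi, hcomm _ i hi]
  have hw0 : w 0 = b₁ := by simp [hw, hv0, hθa₁]
  -- key digit lemma
  have hdig : ∀ r m t, m < L ^ r → w (m + L ^ r * t) = digitPerm L τ r m (w t) := by
    intro r
    induction r with
    | zero =>
      intro m t hm
      have hm0 : m = 0 := by simpa using hm
      subst hm0
      simp [digitPerm]
    | succ r ih =>
      intro m t hm
      have h1 : L * (m / L) + m % L = m := Nat.div_add_mod m L
      have key : m + L ^ (r + 1) * t = L * (m / L + L ^ r * t) + m % L := by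
        have h2 : L ^ (r + 1) = L * L ^ r := by rw [pow_succ]; ring
        calc m + L ^ (r + 1) * t = (L * (m / L) + m % L) + L * (L ^ r * t) := by
              rw [h1, h2, mul_assoc]
          _ = L * (m / L + L ^ r * t) + m % L := by ring
      have hdiv : m / L < L ^ r := by
        rw [Nat.div_lt_iff_lt_mul hL0]
        calc m < L ^ (r + 1) := hm
          _ = L ^ r * L := by rw [pow_succ]
      rw [key, hwfix _ _ (Nat.mod_lt m hL0), ih (m / L) t hdiv]
      simp [digitPerm]
  -- geometric sum
  have hx2 : 2 ≤ L ^ k := by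
    calc 2 ≤ L := hL
      _ = L ^ 1 := (pow_one L).symm
      _ ≤ L ^ k := Nat.pow_le_pow_right (by omega) hk
  have hgeom : ∀ n, (∑ j ∈ Finset.range n, (L ^ k) ^ j) * (L ^ k - 1) + 1 = (L ^ k) ^ n := by
    intro n
    induction n with
    | zero => simp
    | succ n ih =>
      have hp : (L ^ k - 1) + 1 = L ^ k := by omega
      calc (∑ j ∈ Finset.range (n+1), (L ^ k) ^ j) * (L ^ k - 1) + 1
          = ((∑ j ∈ Finset.range n, (L ^ k) ^ j) * (L ^ k - 1) + 1)
            + (L ^ k) ^ n * (L ^ k - 1) := by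
            rw [Finset.sum_range_succ]; ring
        _ = (L ^ k) ^ n * ((L ^ k - 1) + 1) := by rw [ih]; ring
        _ = (L ^ k) ^ (n + 1) := by rw [hp, pow_succ]
  have hD : (L ^ (k * N) - 1) / (L ^ k - 1) = ∑ j ∈ Finset.range N, (L ^ k) ^ j := by
    have h1 : L ^ (k * N) = (L ^ k) ^ N := by rw [pow_mul]
    have h2 := hgeom N
    have h3 : L ^ (k * N) - 1 = (∑ j ∈ Finset.range N, (L ^ k) ^ j) * (L ^ k - 1) := by
      omega
    rw [h3, Nat.mul_div_cancel _ (by omega : 0 < L ^ k - 1)]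
  -- repetition lemma
  have hrep : ∀ n m, m < L ^ k →
      w (m * ∑ j ∈ Finset.range n, (L ^ k) ^ j) = ((digitPerm L τ k m) ^ n) b₁ := by
    intro n
    induction n with
    | zero => intro m _; simpa using hw0
    | succ n ih =>
      intro m hm
      have hsum : (∑ j ∈ Finset.range (n+1), (L ^ k) ^ j)
          = L ^ k * (∑ j ∈ Finset.range n, (L ^ k) ^ j) + 1 := geom_sum_succ
      have harg : m * ∑ j ∈ Finset.range (n+1), (L ^ k) ^ j
          = m + L ^ k * (m * ∑ j ∈ Finset.range n, (L ^ k) ^ j) := by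
        rw [hsum]; ring
      rw [harg, hdig k m _ hm, ih m hm, pow_succ' (digitPerm L τ k m) n,
        Equiv.Perm.mul_apply]
  -- membership in the column group
  have hmem : ∀ r m, digitPerm L τ r m ∈ G := by
    intro r
    induction r with
    | zero => intro m; exact one_mem G
    | succ r ih =>
      intro m
      exact mul_mem (Subgroup.subset_closure ⟨m % L, Nat.mod_lt m hL0, rfl⟩) (ih (m / L))
  -- the power kills the permutation
  have hpow : ∀ m, (digitPerm L τ k m) ^ N = 1 := by
    intro m
    have hg : ((⟨digitPerm L τ k m, hmem k m⟩ : G) ^ N : G) = 1 := pow_card_eq_one'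
    have := congrArg (Subgroup.subtype G) hg
    simpa using this
  refine ⟨0, fun j hj => ?_⟩
  apply hsingleton
  have : θ (v (0 + j * ((L ^ (k * N) - 1) / (L ^ k - 1))))
      = w (j * ((L ^ (k * N) - 1) / (L ^ k - 1))) := by simp [hw]
  rw [this, hD, hrep N j hj, hpow j]
  simp
end
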